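/- arXiv:0907.3344 — 7 statements merged into one kernel-verified Lean document; each statement's English description precedes it below -/
import Mathlib

section
/- If one of the two triangle composites α, β is the identity morphism and the other is an isomorphism, then both α and β are the identity morphisms; consequently the triple (M*, ev, coev) exhibits M* as a left dual of M. -/
open CategoryTheory MonoidalCategory

section Aux

variable {C : Type*} [Category C] [MonoidalCategory C]
    (M Mstar : C) (ev : Mstar ⊗ M ⟶ 𝟙_ C) (coev : 𝟙_ C ⟶ M ⊗ Mstar)

/-- β ∘ β equals β with α inserted on the middle `M` strand. -/
lemma key_b (a : M ⟶ M) (b : Mstar ⟶ Mstar)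
    (ha : a = (λ_ M).inv ≫ (coev ▷ M) ≫ (α_ M Mstar M).hom ≫ (M ◁ ev) ≫ (ρ_ M).hom)
    (hb : b = (ρ_ Mstar).inv ≫ (Mstar ◁ coev) ≫ (α_ Mstar M Mstar).inv ≫
      (ev ▷ Mstar) ≫ (λ_ Mstar).hom) :
    b ≫ b = (ρ_ Mstar).inv ≫ (Mstar ◁ (coev ≫ a ▷ Mstar)) ≫ (α_ Mstar M Mstar).inv ≫
      (ev ▷ Mstar) ≫ (λ_ Mstar).hom := by
  calc b ≫ b
      = 𝟙 Mstar ⊗≫ Mstar ◁ coev ⊗≫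
        (ev ▷ (Mstar ⊗ 𝟙_ C) ≫ 𝟙_ C ◁ (Mstar ◁ coev)) ⊗≫ ev ▷ Mstar ⊗≫ 𝟙 Mstar := by
        rw [hb]; monoidal
    _ = 𝟙 Mstar ⊗≫ Mstar ◁ coev ⊗≫
        ((Mstar ⊗ M) ◁ (Mstar ◁ coev) ≫ ev ▷ (Mstar ⊗ (M ⊗ Mstar))) ⊗≫ ev ▷ Mstar ⊗≫
        𝟙 Mstar := by rw [← whisker_exchange]
    _ = 𝟙 Mstar ⊗≫ Mstar ◁ (coev ▷ 𝟙_ C ≫ (M ⊗ Mstar) ◁ coev) ⊗≫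
        ev ▷ (Mstar ⊗ (M ⊗ Mstar)) ⊗≫ ev ▷ Mstar ⊗≫ 𝟙 Mstar := by monoidal
    _ = 𝟙 Mstar ⊗≫ Mstar ◁ (𝟙_ C ◁ coev ≫ coev ▷ (M ⊗ Mstar)) ⊗≫
        ev ▷ (Mstar ⊗ (M ⊗ Mstar)) ⊗≫ ev ▷ Mstar ⊗≫ 𝟙 Mstar := by rw [whisker_exchange]
    _ = 𝟙 Mstar ⊗≫ Mstar ◁ (𝟙_ C ◁ coev) ⊗≫ Mstar ◁ (coev ▷ (M ⊗ Mstar)) ⊗≫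
        ((ev ▷ (Mstar ⊗ M) ≫ 𝟙_ C ◁ ev) ▷ Mstar) ⊗≫ 𝟙 Mstar := by monoidal
    _ = 𝟙 Mstar ⊗≫ Mstar ◁ (𝟙_ C ◁ coev) ⊗≫ Mstar ◁ (coev ▷ (M ⊗ Mstar)) ⊗≫
        (((Mstar ⊗ M) ◁ ev ≫ ev ▷ 𝟙_ C) ▷ Mstar) ⊗≫ 𝟙 Mstar := by rw [← whisker_exchange]
    _ = (ρ_ Mstar).inv ≫ (Mstar ◁ (coev ≫ a ▷ Mstar)) ≫ (α_ Mstar M Mstar).inv ≫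
        (ev ▷ Mstar) ≫ (λ_ Mstar).hom := by rw [ha]; monoidal

/-- α ∘ α equals α with β inserted on the middle `M*` strand. -/
lemma key_a (a : M ⟶ M) (b : Mstar ⟶ Mstar)
    (ha : a = (λ_ M).inv ≫ (coev ▷ M) ≫ (α_ M Mstar M).hom ≫ (M ◁ ev) ≫ (ρ_ M).hom)
    (hb : b = (ρ_ Mstar).inv ≫ (Mstar ◁ coev) ≫ (α_ Mstar M Mstar).inv ≫
      (ev ▷ Mstar) ≫ (λ_ Mstar).hom) :
    a ≫ a = (λ_ M).inv ≫ ((coev ≫ M ◁ b) ▷ M) ≫ (α_ M Mstar M).hom ≫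
      (M ◁ ev) ≫ (ρ_ M).hom := by
  calc a ≫ a
      = 𝟙 M ⊗≫ coev ▷ M ⊗≫
        (𝟙_ C ◁ (M ◁ ev) ≫ coev ▷ (M ⊗ 𝟙_ C)) ⊗≫ M ◁ ev ⊗≫ 𝟙 M := by
        rw [ha]; monoidal
    _ = 𝟙 M ⊗≫ coev ▷ M ⊗≫
        (coev ▷ (M ⊗ (Mstar ⊗ M)) ≫ (M ⊗ Mstar) ◁ (M ◁ ev)) ⊗≫ M ◁ ev ⊗≫ 𝟙 M := by
        rw [whisker_exchange]
    _ = 𝟙 M ⊗≫ ((𝟙_ C ◁ coev ≫ coev ▷ (M ⊗ Mstar)) ▷ M) ⊗≫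
        (M ⊗ Mstar) ◁ (M ◁ ev) ⊗≫ M ◁ ev ⊗≫ 𝟙 M := by monoidal
    _ = 𝟙 M ⊗≫ ((coev ▷ 𝟙_ C ≫ (M ⊗ Mstar) ◁ coev) ▷ M) ⊗≫
        (M ⊗ Mstar) ◁ (M ◁ ev) ⊗≫ M ◁ ev ⊗≫ 𝟙 M := by rw [whisker_exchange]
    _ = 𝟙 M ⊗≫ (coev ▷ 𝟙_ C) ▷ M ⊗≫ (((M ⊗ Mstar) ◁ coev) ▷ M) ⊗≫
        M ◁ ((Mstar ⊗ M) ◁ ev ≫ ev ▷ 𝟙_ C) ⊗≫ 𝟙 M := by monoidal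
    _ = 𝟙 M ⊗≫ (coev ▷ 𝟙_ C) ▷ M ⊗≫ (((M ⊗ Mstar) ◁ coev) ▷ M) ⊗≫
        M ◁ (ev ▷ (Mstar ⊗ M) ≫ 𝟙_ C ◁ ev) ⊗≫ 𝟙 M := by rw [whisker_exchange]
    _ = (λ_ M).inv ≫ ((coev ≫ M ◁ b) ▷ M) ≫ (α_ M Mstar M).hom ≫
        (M ◁ ev) ≫ (ρ_ M).hom := by rw [hb]; monoidal

end Aux

/-- If one of the two triangle composites α, β is the identity morphism and the
other is an isomorphism, then both α and β are the identity morphisms; consequently the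
triple (M*, ev, coev) exhibits M* as a (left) dual of M. -/
theorem stmt0 {C : Type*} [Category C] [MonoidalCategory C]
    (M Mstar : C) (ev : Mstar ⊗ M ⟶ 𝟙_ C) (coev : 𝟙_ C ⟶ M ⊗ Mstar)
    (a : M ⟶ M) (b : Mstar ⟶ Mstar)
    (ha : a = (λ_ M).inv ≫ (coev ▷ M) ≫ (α_ M Mstar M).hom ≫ (M ◁ ev) ≫ (ρ_ M).hom)
    (hb : b = (ρ_ Mstar).inv ≫ (Mstar ◁ coev) ≫ (α_ Mstar M Mstar).inv ≫
      (ev ▷ Mstar) ≫ (λ_ Mstar).hom)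
    (h : (a = 𝟙 M ∧ IsIso b) ∨ (b = 𝟙 Mstar ∧ IsIso a)) :
    a = 𝟙 M ∧ b = 𝟙 Mstar ∧ Nonempty (ExactPairing M Mstar) := by
  have hab : a = 𝟙 M ∧ b = 𝟙 Mstar := by
    rcases h with ⟨ha1, hbI⟩ | ⟨hb1, haI⟩
    · refine ⟨ha1, ?_⟩
      have hsq : b ≫ b = b ≫ 𝟙 Mstar := by
        rw [key_b M Mstar ev coev a b ha hb, ha1]
        simp [hb]
      exact (cancel_epi b).mp hsq
    · refine ⟨?_, hb1⟩
      have hsq : a ≫ a = a ≫ 𝟙 M := by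
        rw [key_a M Mstar ev coev a b ha hb, hb1]
        simp [ha]
      exact (cancel_epi a).mp hsq
  obtain ⟨ha1, hb1⟩ := hab
  refine ⟨ha1, hb1, ⟨⟨coev, ev, ?_, ?_⟩⟩⟩
  · have := hb.symm.trans hb1
    rw [Iso.inv_comp_eq] at this
    rw [Iso.eq_comp_inv]
    simpa using this
  · have := ha.symm.trans ha1
    rw [Iso.inv_comp_eq] at this
    rw [Iso.eq_comp_inv]
    simpa using this
end

section
/- Let M be a simple object of C with weak dual M∨ as in (iii), and let X be an invertible simple object of C. Then dim_k Hom(M ⊗ M∨, X) equals 1 if X ⊗ M ≅ M and equals 0 otherwise; moreover X ⊗ M ≅ M if and only if M∨ ⊗ X ≅ M∨. -/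
open CategoryTheory MonoidalCategory Limits

/-- An object `X` of a monoidal category is invertible if there exists `X'` with
`X ⊗ X' ≅ 𝟙 ≅ X' ⊗ X`. -/
def IsInvertibleObj {C : Type*} [Category C] [MonoidalCategory C] (X : C) : Prop :=
  ∃ X' : C, Nonempty ((X ⊗ X') ≅ 𝟙_ C) ∧ Nonempty ((X' ⊗ X) ≅ 𝟙_ C)

section Aux

variable {k : Type*} [Field k] {C : Type*} [Category C] [MonoidalCategory C]
  [Preadditive C] [Linear k C] [MonoidalPreadditive C] [MonoidalLinear k C]

/-- Tensoring on the right with an invertible object is an equivalence. -/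
noncomputable def tensorRightEquivAux (X X' : C) (e : X ⊗ X' ≅ 𝟙_ C) (e' : X' ⊗ X ≅ 𝟙_ C) :
    C ≌ C :=
  CategoryTheory.Equivalence.mk (tensorRight X) (tensorRight X')
    (NatIso.ofComponents (fun A => (ρ_ A).symm ≪≫ whiskerLeftIso A e.symm ≪≫ (α_ A X X').symm)
      (by intros; simp only [Functor.id_obj, Functor.comp_obj, Functor.flip_obj_obj, curriedTensor_obj_obj, Iso.trans_hom,
            Iso.symm_hom, whiskerLeftIso_hom, Functor.id_map, Category.assoc, Functor.comp_map,
            Functor.flip_obj_map, curriedTensor_map_app]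
          rw [← associator_inv_naturality_left, whisker_exchange_assoc,
            rightUnitor_inv_naturality_assoc]))
    (NatIso.ofComponents (fun A => α_ A X' X ≪≫ whiskerLeftIso A e' ≪≫ ρ_ A)
      (by intros; simp only [Functor.comp_obj, Functor.flip_obj_obj, curriedTensor_obj_obj, Functor.id_obj, Iso.trans_hom,
            whiskerLeftIso_hom, Functor.comp_map, Functor.flip_obj_map, curriedTensor_map_app, Category.assoc, Functor.id_map]
          rw [associator_naturality_left_assoc, ← whisker_exchange_assoc]
          simp))

/-- Tensoring on the left with an invertible object is an equivalence. -/
noncomputable def tensorLeftEquivAux (X X' : C) (e : X ⊗ X' ≅ 𝟙_ C) (e' : X' ⊗ X ≅ 𝟙_ C) :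
    C ≌ C :=
  CategoryTheory.Equivalence.mk (tensorLeft X) (tensorLeft X')
    (NatIso.ofComponents (fun A => (λ_ A).symm ≪≫ whiskerRightIso e'.symm A ≪≫ α_ X' X A)
      (by intros; simp only [Functor.id_obj, Functor.comp_obj, curriedTensor_obj_obj, Iso.trans_hom,
            Iso.symm_hom, whiskerRightIso_hom, Functor.id_map, Category.assoc, Functor.comp_map,
            curriedTensor_obj_map]
          rw [← associator_naturality_right, ← whisker_exchange_assoc,
            leftUnitor_inv_naturality_assoc]))
    (NatIso.ofComponents (fun A => (α_ X X' A).symm ≪≫ whiskerRightIso e A ≪≫ λ_ A)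
      (by intros; simp only [Functor.comp_obj, curriedTensor_obj_obj, Functor.id_obj, Iso.trans_hom,
            Iso.symm_hom, whiskerRightIso_hom, Functor.comp_map, curriedTensor_obj_map, Category.assoc,
            Functor.id_map]
          rw [associator_inv_naturality_right_assoc, whisker_exchange_assoc]
          simp))

/-- Right tensoring by an invertible object gives a linear equivalence of Hom spaces. -/
noncomputable def rightHomEquivAux (k : Type*) [Field k] {C : Type*} [Category C]
    [MonoidalCategory C] [Preadditive C] [Linear k C] [MonoidalPreadditive C]
    [MonoidalLinear k C] (X X' : C) (e : X ⊗ X' ≅ 𝟙_ C) (e' : X' ⊗ X ≅ 𝟙_ C) (A B : C) :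
    (A ⟶ B) ≃ₗ[k] ((A ⊗ X) ⟶ (B ⊗ X)) :=
  LinearEquiv.ofBijective ((tensorRight X).mapLinearMap k) (by
    have hF := (tensorRightEquivAux X X' e e').fullyFaithfulFunctor
    rw [Functor.coe_mapLinearMap]
    exact ⟨fun f g h => hF.map_injective h, hF.map_surjective⟩)

/-- Left tensoring by an invertible object gives a linear equivalence of Hom spaces. -/
noncomputable def leftHomEquivAux (k : Type*) [Field k] {C : Type*} [Category C]
    [MonoidalCategory C] [Preadditive C] [Linear k C] [MonoidalPreadditive C]
    [MonoidalLinear k C] (X X' : C) (e : X ⊗ X' ≅ 𝟙_ C) (e' : X' ⊗ X ≅ 𝟙_ C) (A B : C) :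
    (A ⟶ B) ≃ₗ[k] ((X ⊗ A) ⟶ (X ⊗ B)) :=
  LinearEquiv.ofBijective ((tensorLeft X).mapLinearMap k) (by
    have hF := (tensorLeftEquivAux X X' e e').fullyFaithfulFunctor
    rw [Functor.coe_mapLinearMap]
    exact ⟨fun f g h => hF.map_injective h, hF.map_surjective⟩)

lemma finrank_hom_eq_zero_of_all_zero {A B : C} (h : ∀ f : A ⟶ B, f = 0) :
    Module.finrank k (A ⟶ B) = 0 := by
  haveI : Subsingleton (A ⟶ B) := ⟨fun a b => by rw [h a, h b]⟩
  exact Module.finrank_zero_of_subsingleton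

/-- If every object decomposes as a finite biproduct of simples, then an object whose
endomorphism algebra is one-dimensional is simple. -/
lemma simple_of_finrank_end_eq_one [HasFiniteBiproducts C]
    (hss : ∀ X : C, ∃ (n : ℕ) (f : Fin n → C), (∀ i, Simple (f i)) ∧ Nonempty (X ≅ ⨁ f))
    (hfd : ∀ X Y : C, FiniteDimensional k (X ⟶ Y))
    (N : C) (h : Module.finrank k (N ⟶ N) = 1) : Simple N := by
  obtain ⟨n, f, hf, ⟨i⟩⟩ := hss N
  haveI := hfd N N
  match n, f, hf, i with
  | 0, f, hf, i =>
    exfalso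
    have h0 : (𝟙 (⨁ f) : _) = 0 := by
      apply biproduct.hom_ext
      exact fun j => Fin.elim0 j
    have hN : (𝟙 N : N ⟶ N) = 0 := by
      have : (𝟙 N : N ⟶ N) = i.hom ≫ 𝟙 (⨁ f) ≫ i.inv := by simp
      rw [this, h0]; simp
    haveI : Subsingleton (N ⟶ N) := ⟨fun a b => by
      rw [← Category.comp_id a, ← Category.comp_id b, hN]; simp⟩
    rw [Module.finrank_zero_of_subsingleton] at h
    exact one_ne_zero h.symm
  | 1, f, hf, i =>
    haveI := hf 0
    have hπι : biproduct.π f 0 ≫ biproduct.ι f 0 = 𝟙 (⨁ f) := by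
      apply biproduct.hom_ext
      intro j
      have hj : j = 0 := Subsingleton.elim j 0
      subst hj
      simp
    exact Simple.of_iso
      ⟨i.hom ≫ biproduct.π f 0, biproduct.ι f 0 ≫ i.inv,
        by
          rw [Category.assoc, ← Category.assoc (biproduct.π f 0), hπι]
          simp,
        by simp⟩
  | (n + 2), f, hf, i =>
    exfalso
    set u : N ⟶ N := i.hom ≫ biproduct.π f 0 ≫ biproduct.ι f 0 ≫ i.inv with hu
    have h10 : (1 : Fin (n + 2)) ≠ 0 := Fin.ne_of_val_ne (by simp)
    set w : f 1 ⟶ N := biproduct.ι f 1 ≫ i.inv with hwdef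
    have hw0 : w ≫ u = 0 := by
      rw [hwdef, hu]
      simp [biproduct.ι_π_ne f h10]
    have hwne : w ≠ 0 := by
      intro hcontra
      haveI := hf 1
      have : w ≫ i.hom ≫ biproduct.π f 1 = 𝟙 (f 1) := by
        rw [hwdef]; simp
      rw [hcontra] at this
      simp at this
      exact id_nonzero (f 1) this.symm
    set w0 : f 0 ⟶ N := biproduct.ι f 0 ≫ i.inv with hw0def
    have hw0u : w0 ≫ u = w0 := by
      rw [hw0def, hu]
      simp [hw0def]
    have hw0ne : w0 ≠ 0 := by
      intro hcontra
      haveI := hf 0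
      have : w0 ≫ i.hom ≫ biproduct.π f 0 = 𝟙 (f 0) := by
        rw [hw0def]; simp
      rw [hcontra] at this
      simp at this
      exact id_nonzero (f 0) this.symm
    have hune : u ≠ 0 := by
      intro hcontra
      rw [hcontra, Limits.comp_zero] at hw0u
      exact hw0ne hw0u.symm
    have hli : LinearIndependent k ![𝟙 N, u] := by
      rw [LinearIndependent.pair_iff]
      intro s t hst
      have h1 : w ≫ (s • 𝟙 N + t • u) = 0 := by rw [hst]; simp
      rw [Preadditive.comp_add, Linear.comp_smul, Linear.comp_smul, Category.comp_id,
        hw0, smul_zero, add_zero] at h1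
      have hs : s = 0 := by
        rcases smul_eq_zero.mp h1 with hs | hw'
        · exact hs
        · exact absurd hw' hwne
      subst hs
      rw [zero_smul, zero_add] at hst
      rcases smul_eq_zero.mp hst with ht | hu'
      · exact ⟨rfl, ht⟩
      · exact absurd hu' hune
    have := hli.fintype_card_le_finrank
    simp [h] at this
end Aux

/-- for a simple M with weak dual M∨ and an invertible simple X,
dim Hom(M ⊗ M∨, X) = 1 if X ⊗ M ≅ M and 0 otherwise; and X ⊗ M ≅ M iff M∨ ⊗ X ≅ M∨. -/
theorem stmt2 (k : Type*) [Field k] [CharZero k]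
    (C : Type*) [Category C] [MonoidalCategory C]
    [Preadditive C] [Linear k C] [MonoidalPreadditive C] [MonoidalLinear k C]
    [HasFiniteBiproducts C]
    -- (i) semisimplicity with finitely many simples, finite-dimensional Homs,
    -- one-dimensional endomorphism rings of simples, no Homs between non-isomorphic simples
    (hss : ∀ X : C, ∃ (n : ℕ) (f : Fin n → C), (∀ i, Simple (f i)) ∧ Nonempty (X ≅ ⨁ f))
    (hfin : ∃ (n : ℕ) (f : Fin n → C), ∀ X : C, Simple X → ∃ i, Nonempty (X ≅ f i))
    (hfd : ∀ X Y : C, FiniteDimensional k (X ⟶ Y))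
    (hend : ∀ X : C, Simple X → Module.finrank k (X ⟶ X) = 1)
    (hhom : ∀ X Y : C, Simple X → Simple Y → ¬ Nonempty (X ≅ Y) → ∀ f : X ⟶ Y, f = 0)
    -- (ii) the unit object is simple
    (hunit : Simple (𝟙_ C))
    -- (iii) weak duality for simple objects
    (hdual : ∀ M : C, Simple M → ∃ Md : C, Simple Md ∧
      Module.finrank k ((M ⊗ Md) ⟶ 𝟙_ C) = 1 ∧
      Module.finrank k ((Md ⊗ M) ⟶ 𝟙_ C) = 1 ∧
      ∀ Y : C, Simple Y → ¬ Nonempty (Y ≅ Md) →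
        (∀ f : (M ⊗ Y) ⟶ 𝟙_ C, f = 0) ∧ (∀ f : (Y ⊗ M) ⟶ 𝟙_ C, f = 0))
    -- M is simple with weak dual Md as in (iii)
    (M Md : C) (hM : Simple M) (hMd : Simple Md)
    (h1 : Module.finrank k ((M ⊗ Md) ⟶ 𝟙_ C) = 1)
    (h2 : Module.finrank k ((Md ⊗ M) ⟶ 𝟙_ C) = 1)
    (h3 : ∀ Y : C, Simple Y → ¬ Nonempty (Y ≅ Md) →
      (∀ f : (M ⊗ Y) ⟶ 𝟙_ C, f = 0) ∧ (∀ f : (Y ⊗ M) ⟶ 𝟙_ C, f = 0))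
    -- X is an invertible simple object
    (X : C) (hX : Simple X) (hXinv : IsInvertibleObj X) :
    (Nonempty ((X ⊗ M) ≅ M) → Module.finrank k ((M ⊗ Md) ⟶ X) = 1) ∧
    (¬ Nonempty ((X ⊗ M) ≅ M) → Module.finrank k ((M ⊗ Md) ⟶ X) = 0) ∧
    (Nonempty ((X ⊗ M) ≅ M) ↔ Nonempty ((Md ⊗ X) ≅ Md)) := by
  obtain ⟨X', ⟨e⟩, ⟨e'⟩⟩ := hXinv
  -- the weak dual of Md
  obtain ⟨E, hE, hE1, hE2, hE3⟩ := hdual Md hMd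
  -- M is isomorphic to the weak dual of Md
  have hME : Nonempty (M ≅ E) := by
    by_contra hn
    have hz := (hE3 M hM hn).1
    have : Module.finrank k ((Md ⊗ M) ⟶ 𝟙_ C) = 0 := finrank_hom_eq_zero_of_all_zero hz
    rw [h2] at this
    exact one_ne_zero this
  -- simplicity of the relevant tensor products
  have hMdX : Simple (Md ⊗ X) := by
    apply simple_of_finrank_end_eq_one hss hfd
    rw [← (rightHomEquivAux k X X' e e' Md Md).finrank_eq]
    exact hend Md hMd
  have hXM : Simple (X ⊗ M) := by
    apply simple_of_finrank_end_eq_one hss hfd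
    rw [← (leftHomEquivAux k X X' e e' M M).finrank_eq]
    exact hend M hM
  have hMdX' : Simple (Md ⊗ X') := by
    apply simple_of_finrank_end_eq_one hss hfd
    rw [← (rightHomEquivAux k X' X e' e Md Md).finrank_eq]
    exact hend Md hMd
  -- Md ⊗ X ≅ Md iff Md ⊗ X' ≅ Md
  have key1 : Nonempty ((Md ⊗ X) ≅ Md) ↔ Nonempty ((Md ⊗ X') ≅ Md) := by
    constructor
    · rintro ⟨i⟩
      exact ⟨whiskerRightIso i.symm X' ≪≫ α_ Md X X' ≪≫ whiskerLeftIso Md e ≪≫ ρ_ Md⟩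
    · rintro ⟨i⟩
      exact ⟨whiskerRightIso i.symm X ≪≫ α_ Md X' X ≪≫ whiskerLeftIso Md e' ≪≫ ρ_ Md⟩
  -- the main equivalence (third statement)
  have main_iff : Nonempty ((X ⊗ M) ≅ M) ↔ Nonempty ((Md ⊗ X) ≅ Md) := by
    constructor
    · rintro ⟨i⟩
      by_contra hn
      have hz := (h3 (Md ⊗ X) hMdX hn).2
      have h0 : Module.finrank k (((Md ⊗ X) ⊗ M) ⟶ 𝟙_ C) = 0 :=
        finrank_hom_eq_zero_of_all_zero hz
      have heq : Module.finrank k (((Md ⊗ X) ⊗ M) ⟶ 𝟙_ C)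
          = Module.finrank k ((Md ⊗ M) ⟶ 𝟙_ C) :=
        (Linear.homCongr k (α_ Md X M ≪≫ whiskerLeftIso Md i) (Iso.refl (𝟙_ C))).finrank_eq
      rw [h0, h2] at heq
      exact one_ne_zero heq.symm
    · rintro ⟨j⟩
      by_contra hn
      have hnE : ¬ Nonempty ((X ⊗ M) ≅ E) := by
        rintro ⟨i⟩
        exact hn ⟨i ≪≫ hME.some.symm⟩
      have hz := (hE3 (X ⊗ M) hXM hnE).1
      have h0 : Module.finrank k ((Md ⊗ (X ⊗ M)) ⟶ 𝟙_ C) = 0 :=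
        finrank_hom_eq_zero_of_all_zero hz
      have heq : Module.finrank k ((Md ⊗ (X ⊗ M)) ⟶ 𝟙_ C)
          = Module.finrank k ((Md ⊗ M) ⟶ 𝟙_ C) :=
        (Linear.homCongr k ((α_ Md X M).symm ≪≫ whiskerRightIso j M)
          (Iso.refl (𝟙_ C))).finrank_eq
      rw [h0, h2] at heq
      exact one_ne_zero heq.symm
  -- key finrank computation
  have hcomp : ∀ Z : C, Module.finrank k ((M ⊗ Md) ⟶ X)
      = Module.finrank k ((M ⊗ (Md ⊗ X')) ⟶ 𝟙_ C) := by
    intro Z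
    calc Module.finrank k ((M ⊗ Md) ⟶ X)
        = Module.finrank k (((M ⊗ Md) ⊗ X') ⟶ (X ⊗ X')) :=
          (rightHomEquivAux k X' X e' e (M ⊗ Md) X).finrank_eq
      _ = Module.finrank k ((M ⊗ (Md ⊗ X')) ⟶ 𝟙_ C) :=
          (Linear.homCongr k (α_ M Md X') e).finrank_eq
  refine ⟨?_, ?_, main_iff⟩
  · intro hiso
    have hj' : Nonempty ((Md ⊗ X') ≅ Md) := key1.mp (main_iff.mp hiso)
    obtain ⟨j'⟩ := hj'
    rw [hcomp M]
    calc Module.finrank k ((M ⊗ (Md ⊗ X')) ⟶ 𝟙_ C)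
        = Module.finrank k ((M ⊗ Md) ⟶ 𝟙_ C) :=
          (Linear.homCongr k (whiskerLeftIso M j') (Iso.refl (𝟙_ C))).finrank_eq
      _ = 1 := h1
  · intro hniso
    have hn' : ¬ Nonempty ((Md ⊗ X') ≅ Md) := fun h => hniso (main_iff.mpr (key1.mpr h))
    have hz := (h3 (Md ⊗ X') hMdX' hn').1
    rw [hcomp M]
    exact finrank_hom_eq_zero_of_all_zero hz
end

section
/- Let M be a simple object of C with weak dual M∨ as in (iii), and let e₁ : M∨ ⊗ M → 1 be a nonzero morphism. Then there exist an invertible simple object X of C with X ⊗ M ≅ M and a nonzero morphism c_X : X → M ⊗ M∨ such that the composite X ⊗ M → (M ⊗ M∨) ⊗ M ≅ M ⊗ (M∨ ⊗ M) → M ⊗ 1 (given by c_X ⊗ id_M, the associator, and id_M ⊗ e₁) is nonzero. -/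
open CategoryTheory MonoidalCategory Limits

section Aux

variable {C : Type*} [Category C] [MonoidalCategory C] [Preadditive C] [MonoidalPreadditive C]

lemma aux_whiskerLeft_cancel {P Q A B : C} (ε : (P ⊗ Q) ≅ 𝟙_ C) (f : A ⟶ B)
    (h : Q ◁ f = 0) : f = 0 := by
  have h1 : (P ⊗ Q) ◁ f = 0 := by rw [tensor_whiskerLeft, h]; simp
  have h2 : ε.hom ▷ A ≫ (𝟙_ C) ◁ f = 0 := by rw [← whisker_exchange, h1, zero_comp]
  have h3 : (𝟙_ C) ◁ f = 0 := by
    have := congrArg (fun g => (whiskerRightIso ε A).inv ≫ g) h2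
    simpa using this
  rw [id_whiskerLeft] at h3
  simpa using congrArg (fun g => (λ_ A).inv ≫ g ≫ (λ_ B).hom) h3

omit [MonoidalCategory C] [MonoidalPreadditive C] in
lemma aux_exists_ne_zero {n : ℕ} {f : Fin n → C} [HasBiproduct f] {B : C}
    (g : (⨁ f) ⟶ B) (hg : g ≠ 0) : ∃ i, biproduct.ι f i ≫ g ≠ 0 := by
  by_contra h
  push_neg at h
  apply hg
  calc g = 𝟙 _ ≫ g := (Category.id_comp g).symm
  _ = (∑ j, biproduct.π f j ≫ biproduct.ι f j) ≫ g := by rw [biproduct.total]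
  _ = ∑ j, biproduct.π f j ≫ (biproduct.ι f j ≫ g) := by
        rw [Preadditive.sum_comp]; simp [Category.assoc]
  _ = 0 := by simp [h]

lemma aux_scalar {k : Type*} [Field k] {D : Type*} [Category D] [Preadditive D] [Linear k D]
    (X : D) (h1 : Module.finrank k (X ⟶ X) = 1) (h0 : 𝟙 X ≠ 0) (g : X ⟶ X) :
    ∃ c : k, g = c • 𝟙 X := by
  obtain ⟨c, hc⟩ := (finrank_eq_one_iff_of_nonzero' (𝟙 X) h0).mp h1 g
  exact ⟨c, hc.symm⟩

end Aux

/-- given a nonzero e₁ : M∨ ⊗ M → 1, there are an invertible simple X with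
X ⊗ M ≅ M and a nonzero c_X : X → M ⊗ M∨ with nonzero composite
X ⊗ M → (M ⊗ M∨) ⊗ M ≅ M ⊗ (M∨ ⊗ M) → M ⊗ 1. -/
theorem stmt4 (k : Type*) [Field k] [CharZero k]
    (C : Type*) [Category C] [MonoidalCategory C]
    [Preadditive C] [Linear k C] [MonoidalPreadditive C] [MonoidalLinear k C]
    [HasFiniteBiproducts C]
    -- (i) semisimplicity with finitely many simples, finite-dimensional Homs,
    -- one-dimensional endomorphism rings of simples, no Homs between non-isomorphic simples
    (hss : ∀ X : C, ∃ (n : ℕ) (f : Fin n → C), (∀ i, Simple (f i)) ∧ Nonempty (X ≅ ⨁ f))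
    (hfin : ∃ (n : ℕ) (f : Fin n → C), ∀ X : C, Simple X → ∃ i, Nonempty (X ≅ f i))
    (hfd : ∀ X Y : C, FiniteDimensional k (X ⟶ Y))
    (hend : ∀ X : C, Simple X → Module.finrank k (X ⟶ X) = 1)
    (hhom : ∀ X Y : C, Simple X → Simple Y → ¬ Nonempty (X ≅ Y) → ∀ f : X ⟶ Y, f = 0)
    -- (ii) the unit object is simple
    (hunit : Simple (𝟙_ C))
    -- (iii) weak duality for simple objects
    (hdual : ∀ M : C, Simple M → ∃ Md : C, Simple Md ∧
      Module.finrank k ((M ⊗ Md) ⟶ 𝟙_ C) = 1 ∧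
      Module.finrank k ((Md ⊗ M) ⟶ 𝟙_ C) = 1 ∧
      ∀ Y : C, Simple Y → ¬ Nonempty (Y ≅ Md) →
        (∀ f : (M ⊗ Y) ⟶ 𝟙_ C, f = 0) ∧ (∀ f : (Y ⊗ M) ⟶ 𝟙_ C, f = 0))
    -- (iv) a grading of the simple objects by a finite group Γ
    (Γ : Type*) [Group Γ] [Finite Γ] (deg : C → Γ)
    (hdeg_iso : ∀ X Y : C, Simple X → Simple Y → Nonempty (X ≅ Y) → deg X = deg Y)
    (hdeg_mul : ∀ X Y Z : C, Simple X → Simple Y → Simple Z →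
      (∃ f : Z ⟶ X ⊗ Y, f ≠ 0) → deg Z = deg X * deg Y)
    (hpointed : ∀ X : C, Simple X → deg X = 1 → IsInvertibleObj X)
    -- M is simple with weak dual Md as in (iii)
    (M Md : C) (hM : Simple M) (hMd : Simple Md)
    (h1 : Module.finrank k ((M ⊗ Md) ⟶ 𝟙_ C) = 1)
    (h2 : Module.finrank k ((Md ⊗ M) ⟶ 𝟙_ C) = 1)
    (h3 : ∀ Y : C, Simple Y → ¬ Nonempty (Y ≅ Md) →
      (∀ f : (M ⊗ Y) ⟶ 𝟙_ C, f = 0) ∧ (∀ f : (Y ⊗ M) ⟶ 𝟙_ C, f = 0))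
    -- a nonzero morphism e₁ : M∨ ⊗ M → 1
    (e₁ : (Md ⊗ M) ⟶ 𝟙_ C) (he₁ : e₁ ≠ 0) :
    ∃ X : C, Simple X ∧ IsInvertibleObj X ∧ Nonempty ((X ⊗ M) ≅ M) ∧
      ∃ cX : X ⟶ M ⊗ Md, cX ≠ 0 ∧
        (cX ▷ M) ≫ (α_ M Md M).hom ≫ (M ◁ e₁) ≠ 0 := by
  haveI := hunit
  haveI := hM
  haveI := hMd
  -- deg of the unit is 1
  have hid1 : 𝟙 (𝟙_ C) ≠ 0 := id_nonzero _
  have hlu : (λ_ (𝟙_ C)).inv ≠ 0 := by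
    intro h
    exact hid1 (by rw [← (λ_ (𝟙_ C)).inv_hom_id, h, zero_comp])
  have hdeg1 : deg (𝟙_ C) = 1 := by
    have h := hdeg_mul _ _ _ hunit hunit hunit ⟨(λ_ (𝟙_ C)).inv, hlu⟩
    have := mul_left_cancel (a := deg (𝟙_ C)) (b := (1 : Γ)) (c := deg (𝟙_ C))
      (by rw [mul_one, ← h])
    exact this.symm
  -- e₁ is split epi: find a section s
  obtain ⟨n, Z, hZ, ⟨φ⟩⟩ := hss (Md ⊗ M)
  have hr : φ.inv ≫ e₁ ≠ 0 := by
    intro h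
    exact he₁ (by rw [← Category.id_comp e₁, ← φ.hom_inv_id, Category.assoc, h, comp_zero])
  obtain ⟨j, hj⟩ := aux_exists_ne_zero (φ.inv ≫ e₁) hr
  haveI := hZ j
  have hiso : Nonempty (Z j ≅ 𝟙_ C) := by
    by_contra h
    exact hj (by rw [← Category.assoc]; exact hhom _ _ (hZ j) hunit h _)
  obtain ⟨θ⟩ := hiso
  obtain ⟨c, hc⟩ := aux_scalar (k := k) (𝟙_ C) (hend _ hunit) hid1
    (θ.inv ≫ biproduct.ι Z j ≫ φ.inv ≫ e₁)
  have hcne : c ≠ 0 := by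
    intro h
    apply hj
    have h0 : θ.inv ≫ biproduct.ι Z j ≫ φ.inv ≫ e₁ = 0 := by rw [hc, h, zero_smul]
    have := congrArg (fun g => θ.hom ≫ g) h0
    simpa using this
  set s : 𝟙_ C ⟶ Md ⊗ M := c⁻¹ • (θ.inv ≫ biproduct.ι Z j ≫ φ.inv) with hs_def
  have hse : s ≫ e₁ = 𝟙 (𝟙_ C) := by
    rw [hs_def, Linear.smul_comp]
    simp only [Category.assoc]
    rw [hc, smul_smul, inv_mul_cancel₀ hcne, one_smul]
  have hsne : s ≠ 0 := by
    intro h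
    exact hid1 (by rw [← hse, h, zero_comp])
  -- degrees
  have hdMdM : deg Md * deg M = 1 := by
    have := hdeg_mul Md M (𝟙_ C) hMd hM hunit ⟨s, hsne⟩
    rw [← this, hdeg1]
  have hMdinv : deg Md = (deg M)⁻¹ := eq_inv_of_mul_eq_one_left hdMdM
  -- M ◁ e₁ is nonzero
  have hidM1 : 𝟙 (M ⊗ 𝟙_ C) ≠ 0 := by
    intro h
    apply id_nonzero M
    have := congrArg (fun g => (ρ_ M).inv ≫ g ≫ (ρ_ M).hom) h
    simpa using this
  have hMe : M ◁ e₁ ≠ 0 := by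
    intro h
    apply hidM1
    have h5 : M ◁ (s ≫ e₁) = 𝟙 (M ⊗ 𝟙_ C) := by rw [hse]; simp
    rw [MonoidalCategory.whiskerLeft_comp, h, comp_zero] at h5
    exact h5.symm
  have hg : (α_ M Md M).hom ≫ (M ◁ e₁) ≠ 0 := by
    intro h
    apply hMe
    rw [← Category.id_comp (M ◁ e₁), ← (α_ M Md M).inv_hom_id, Category.assoc, h, comp_zero]
  -- decompose M ⊗ Md
  obtain ⟨m, Xs, hXs, ⟨χ⟩⟩ := hss (M ⊗ Md)
  have hG : (χ.inv ▷ M) ≫ (α_ M Md M).hom ≫ (M ◁ e₁) ≠ 0 := by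
    intro h
    apply hg
    have h5 : (χ.hom ▷ M) ≫ (χ.inv ▷ M) ≫ (α_ M Md M).hom ≫ (M ◁ e₁) = 0 := by
      rw [h, comp_zero]
    rwa [← Category.assoc, ← comp_whiskerRight, χ.hom_inv_id, id_whiskerRight,
      Category.id_comp] at h5
  have hGi : ∃ i, (biproduct.ι Xs i ▷ M) ≫ (χ.inv ▷ M) ≫ (α_ M Md M).hom ≫ (M ◁ e₁) ≠ 0 := by
    by_contra h
    push_neg at h
    apply hG
    have htot : (𝟙 (⨁ Xs) ▷ M) ≫ (χ.inv ▷ M) ≫ (α_ M Md M).hom ≫ (M ◁ e₁) = 0 := by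
      rw [← biproduct.total, sum_whiskerRight, Preadditive.sum_comp]
      refine Finset.sum_eq_zero fun i _ => ?_
      rw [comp_whiskerRight, Category.assoc, h i, comp_zero]
    rwa [id_whiskerRight, Category.id_comp] at htot
  obtain ⟨i, hi⟩ := hGi
  set X := Xs i with hX_def
  haveI := hXs i
  set cX : X ⟶ M ⊗ Md := biproduct.ι Xs i ≫ χ.inv with hcX_def
  have hcomp : (cX ▷ M) ≫ (α_ M Md M).hom ≫ (M ◁ e₁) ≠ 0 := by
    rw [hcX_def, comp_whiskerRight, Category.assoc]
    exact hi
  have hcXne : cX ≠ 0 := by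
    intro h
    apply hcomp
    rw [h, MonoidalPreadditive.zero_whiskerRight, zero_comp]
  -- deg X = 1
  have hdX : deg X = 1 := by
    have h5 := hdeg_mul M Md X hM hMd (hXs i) ⟨cX, hcXne⟩
    rw [h5, hMdinv, mul_inv_cancel]
  have hXinv : IsInvertibleObj X := hpointed X (hXs i) hdX
  obtain ⟨X', ⟨ε⟩, ⟨η⟩⟩ := hXinv
  -- the nonzero morphism X ⊗ M ⟶ M
  set h' : X ⊗ M ⟶ M := ((cX ▷ M) ≫ (α_ M Md M).hom ≫ (M ◁ e₁)) ≫ (ρ_ M).hom with hh'_def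
  have hh'ne : h' ≠ 0 := by
    intro h
    apply hcomp
    have h5 : h' ≫ (ρ_ M).inv = 0 := by rw [h, zero_comp]
    rwa [hh'_def, Category.assoc, (ρ_ M).hom_inv_id, Category.comp_id] at h5
  -- the conjugation map Φ : End(X ⊗ M) → End(M)
  set u : X' ⊗ (X ⊗ M) ≅ M :=
    (α_ X' X M).symm ≪≫ whiskerRightIso η M ≪≫ λ_ M with hu_def
  set Φ : (X ⊗ M ⟶ X ⊗ M) → (M ⟶ M) := fun f => u.inv ≫ (X' ◁ f) ≫ u.hom with hΦ_def
  have hΦid : Φ (𝟙 (X ⊗ M)) = 𝟙 M := by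
    simp [hΦ_def]
  have hΦzero : Φ 0 = 0 := by simp [hΦ_def]
  have hΦcomp : ∀ f g : X ⊗ M ⟶ X ⊗ M, Φ (f ≫ g) = Φ f ≫ Φ g := by
    intro f g
    simp [hΦ_def, MonoidalCategory.whiskerLeft_comp]
  have hΦinj : ∀ f : X ⊗ M ⟶ X ⊗ M, Φ f = 0 → f = 0 := by
    intro f hf
    apply aux_whiskerLeft_cancel ε
    have h5 : u.hom ≫ (Φ f) ≫ u.inv = X' ◁ f := by
      simp [hΦ_def]
    rw [← h5, hf, zero_comp, comp_zero]
  have hidM : 𝟙 M ≠ 0 := id_nonzero M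
  -- X ⊗ M is isomorphic to a single simple object
  obtain ⟨m', Ys, hYs, ⟨ψ⟩⟩ := hss (X ⊗ M)
  -- m' = 1
  have hm' : m' = 1 := by
    rcases Nat.lt_or_ge m' 1 with hlt | hge
    · exfalso
      interval_cases m'
      have hz : 𝟙 (⨁ Ys) = 0 := by
        rw [← biproduct.total]; simp
      have hzz : 𝟙 (X ⊗ M) = 0 := by
        have := congrArg (fun g => ψ.hom ≫ g ≫ ψ.inv) hz
        simpa using this
      exact hidM (by rw [← hΦid, hzz, hΦzero])
    rcases Nat.lt_or_ge m' 2 with h2' | h2'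
    · omega
    exfalso
    have key : ∀ a : Fin m', Φ (ψ.hom ≫ biproduct.π Ys a ≫ biproduct.ι Ys a ≫ ψ.inv) = 𝟙 M := by
      intro a
      haveI := hYs a
      set p := ψ.hom ≫ biproduct.π Ys a ≫ biproduct.ι Ys a ≫ ψ.inv with hp_def
      have hpp : p ≫ p = p := by
        simp [hp_def]
      have hq : (biproduct.ι Ys a ≫ ψ.inv) ≫ p ≫ (ψ.hom ≫ biproduct.π Ys a) = 𝟙 (Ys a) := by
        simp [hp_def]
      have hpne : p ≠ 0 := by
        intro h
        exact id_nonzero (Ys a) (by rw [← hq, h]; simp)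
      obtain ⟨c', hc'⟩ := aux_scalar (k := k) M (hend M hM) hidM (Φ p)
      have h4 := hΦcomp p p
      rw [hpp, hc'] at h4
      have h5 : (c' * c') • (𝟙 M) = c' • 𝟙 M := by
        conv_rhs => rw [h4]
        rw [Linear.smul_comp, Linear.comp_smul, Category.id_comp, smul_smul]
      have hcc : c' * c' = c' := by
        have h6 : (c' * c' - c') • (𝟙 M) = 0 := by rw [sub_smul, h5, sub_self]
        rcases smul_eq_zero.mp h6 with h | h
        · exact sub_eq_zero.mp h
        · exact absurd h hidM
      have hc'ne : c' ≠ 0 := fun h => hpne (hΦinj p (by rw [hc', h, zero_smul]))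
      have hc1 : c' = 1 := mul_right_cancel₀ hc'ne (by rw [one_mul]; exact hcc)
      rw [hc', hc1, one_smul]
    set i0 : Fin m' := ⟨0, by omega⟩ with hi0
    set i1 : Fin m' := ⟨1, by omega⟩ with hi1
    have h01 : i0 ≠ i1 := by
      rw [hi0, hi1]
      exact Fin.ne_of_val_ne (by norm_num)
    have horth : (ψ.hom ≫ biproduct.π Ys i0 ≫ biproduct.ι Ys i0 ≫ ψ.inv) ≫
        (ψ.hom ≫ biproduct.π Ys i1 ≫ biproduct.ι Ys i1 ≫ ψ.inv) = 0 := by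
      simp [biproduct.ι_π_ne_assoc _ h01]
    have hcontr := hΦcomp (ψ.hom ≫ biproduct.π Ys i0 ≫ biproduct.ι Ys i0 ≫ ψ.inv)
      (ψ.hom ≫ biproduct.π Ys i1 ≫ biproduct.ι Ys i1 ≫ ψ.inv)
    rw [horth, key i0, key i1, Category.comp_id] at hcontr
    exact hidM (by rw [← hcontr, hΦzero])
  subst hm'
  -- ⨁ Ys ≅ Ys 0 and Ys 0 ≅ M
  have hπι : biproduct.π Ys 0 ≫ biproduct.ι Ys 0 = 𝟙 (⨁ Ys) := by
    rw [← biproduct.total, Fin.sum_univ_one]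
  have hv : biproduct.ι Ys 0 ≫ ψ.inv ≫ h' ≠ 0 := by
    intro h
    apply hh'ne
    have e : h' = ψ.hom ≫ (biproduct.π Ys 0 ≫ biproduct.ι Ys 0) ≫ ψ.inv ≫ h' := by
      rw [hπι]; simp
    rw [e]
    simp only [Category.assoc]
    rw [h]
    simp
  have hYsM : Nonempty (Ys 0 ≅ M) := by
    by_contra h
    exact hv (hhom _ _ (hYs 0) hM h _)
  obtain ⟨w⟩ := hYsM
  exact ⟨X, hXs i, hpointed X (hXs i) hdX,
    ⟨ψ ≪≫ (⟨biproduct.π Ys 0, biproduct.ι Ys 0, hπι, biproduct.ι_π_self Ys 0⟩ : (⨁ Ys) ≅ Ys 0)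
      ≪≫ w⟩, cX, hcXne, hcomp⟩
end

section
/- Let M be a simple object of C with weak dual M∨ as in (iii), and let c₁ : 1 → M ⊗ M∨ and e₁ : M∨ ⊗ M → 1 be nonzero morphisms. Then both of the following composites are isomorphisms: (a) M ≅ 1 ⊗ M → (M ⊗ M∨) ⊗ M ≅ M ⊗ (M∨ ⊗ M) → M ⊗ 1 ≅ M (given by c₁ ⊗ id_M, the associator, and id_M ⊗ e₁); and (b) M∨ ≅ M∨ ⊗ 1 → M∨ ⊗ (M ⊗ M∨) ≅ (M∨ ⊗ M) ⊗ M∨ → 1 ⊗ M∨ ≅ M∨ (given by id_{M∨} ⊗ c₁, the associator, and e₁ ⊗ id_{M∨}). -/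
open CategoryTheory MonoidalCategory Limits

set_option linter.unusedSectionVars false
set_option maxHeartbeats 1600000

section Stmt5Aux
variable {k : Type*} [Field k]
variable {C : Type*} [Category C] [MonoidalCategory C]
  [Preadditive C] [Linear k C] [MonoidalPreadditive C] [MonoidalLinear k C]
  [HasFiniteBiproducts C]

/-! ### Generic linear-algebra and Schur-type lemmas -/

theorem aux_id_ne_zero {X : C} (h : Module.finrank k (X ⟶ X) = 1) : 𝟙 X ≠ 0 := by
  intro h0
  have hall : ∀ f : X ⟶ X, f = 0 := fun f => by
    rw [← Category.comp_id f, h0, Limits.comp_zero]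
  haveI : Subsingleton (X ⟶ X) := ⟨fun a b => by rw [hall a, hall b]⟩
  rw [Module.finrank_zero_of_subsingleton] at h
  exact one_ne_zero h.symm

theorem aux_exists_smul {X : C} (h : Module.finrank k (X ⟶ X) = 1) (f : X ⟶ X) :
    ∃ c : k, f = c • 𝟙 X := by
  obtain ⟨c, hc⟩ := (finrank_eq_one_iff_of_nonzero' (𝟙 X) (aux_id_ne_zero h)).mp h f
  exact ⟨c, hc.symm⟩

theorem aux_isIso_of_ne_zero
    (hend : ∀ X : C, Simple X → Module.finrank k (X ⟶ X) = 1)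
    (hhom : ∀ X Y : C, Simple X → Simple Y → ¬ Nonempty (X ≅ Y) → ∀ f : X ⟶ Y, f = 0)
    {X Y : C} (hX : Simple X) (hY : Simple Y) (f : X ⟶ Y) (hf : f ≠ 0) : IsIso f := by
  have hne : Nonempty (X ≅ Y) := by
    by_contra h
    exact hf (hhom X Y hX hY h f)
  obtain ⟨e⟩ := hne
  obtain ⟨c, hc⟩ := aux_exists_smul (hend X hX) (f ≫ e.inv)
  have hc0 : c ≠ 0 := by
    intro h0
    apply hf
    have : (f ≫ e.inv) ≫ e.hom = (c • 𝟙 X) ≫ e.hom := by rw [hc]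
    simpa [h0] using this
  have hfe : f = c • e.hom := by
    have : (f ≫ e.inv) ≫ e.hom = (c • 𝟙 X) ≫ e.hom := by rw [hc]
    simpa using this
  rw [hfe]
  exact ⟨⟨c⁻¹ • e.inv, by simp [smul_smul, inv_mul_cancel₀ hc0, mul_inv_cancel₀ hc0],
    by simp [smul_smul, inv_mul_cancel₀ hc0, mul_inv_cancel₀ hc0]⟩⟩

/-! ### Hom-space dimension bookkeeping via biproduct decompositions -/

noncomputable def auxHomPi {n : ℕ} (f : Fin n → C) (W : C) :
    (W ⟶ ⨁ f) ≃ₗ[k] Π i, (W ⟶ f i) where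
  toFun g := fun i => g ≫ biproduct.π f i
  map_add' g h := by funext i; simp [Preadditive.add_comp]
  map_smul' c g := by funext i; simp
  invFun h := biproduct.lift h
  left_inv g := by apply biproduct.hom_ext; intro i; simp
  right_inv h := by funext i; simp

noncomputable def auxPiHom {n : ℕ} (f : Fin n → C) (W : C) :
    (⨁ f ⟶ W) ≃ₗ[k] Π i, (f i ⟶ W) where
  toFun g := fun i => biproduct.ι f i ≫ g
  map_add' g h := by funext i; simp [Preadditive.comp_add]
  map_smul' c g := by funext i; simp
  invFun h := biproduct.desc h
  left_inv g := by apply biproduct.hom_ext'; intro i; simp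
  right_inv h := by funext i; simp

theorem aux_finrank_hom_unit
    (hfd : ∀ X Y : C, FiniteDimensional k (X ⟶ Y))
    (hhom : ∀ X Y : C, Simple X → Simple Y → ¬ Nonempty (X ≅ Y) → ∀ f : X ⟶ Y, f = 0)
    (hunit : Simple (𝟙_ C))
    {n : ℕ} (f : Fin n → C) (hsimp : ∀ i, Simple (f i)) {X : C} (φ : X ≅ ⨁ f) :
    Module.finrank k (𝟙_ C ⟶ X) = Module.finrank k (X ⟶ 𝟙_ C) := by
  haveI := hfd
  have e1 : Module.finrank k (𝟙_ C ⟶ X) = ∑ i, Module.finrank k (𝟙_ C ⟶ f i) := by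
    rw [LinearEquiv.finrank_eq ((Linear.homCongr k (Iso.refl (𝟙_ C)) φ).trans
      (auxHomPi f (𝟙_ C)))]
    exact Module.finrank_pi_fintype k
  have e2 : Module.finrank k (X ⟶ 𝟙_ C) = ∑ i, Module.finrank k (f i ⟶ 𝟙_ C) := by
    rw [LinearEquiv.finrank_eq ((Linear.homCongr k φ (Iso.refl (𝟙_ C))).trans
      (auxPiHom f (𝟙_ C)))]
    exact Module.finrank_pi_fintype k
  rw [e1, e2]
  apply Finset.sum_congr rfl
  intro i _
  by_cases h : Nonempty (f i ≅ 𝟙_ C)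
  · obtain ⟨e⟩ := h
    rw [LinearEquiv.finrank_eq (Linear.homCongr k (Iso.refl (𝟙_ C)) e),
        LinearEquiv.finrank_eq (Linear.homCongr k e (Iso.refl (𝟙_ C)))]
  · have hz1 : ∀ g : 𝟙_ C ⟶ f i, g = 0 := by
      intro g
      exact hhom _ _ hunit (hsimp i) (fun ⟨e⟩ => h ⟨e.symm⟩) g
    have hz2 : ∀ g : f i ⟶ 𝟙_ C, g = 0 := hhom _ _ (hsimp i) hunit h
    haveI : Subsingleton (𝟙_ C ⟶ f i) := ⟨fun a b => by rw [hz1 a, hz1 b]⟩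
    haveI : Subsingleton (f i ⟶ 𝟙_ C) := ⟨fun a b => by rw [hz2 a, hz2 b]⟩
    rw [Module.finrank_zero_of_subsingleton, Module.finrank_zero_of_subsingleton]

/-! ### Simplicity from 1-dimensional endomorphism ring -/

theorem aux_simple_of_finrank
    (hss : ∀ X : C, ∃ (n : ℕ) (f : Fin n → C), (∀ i, Simple (f i)) ∧ Nonempty (X ≅ ⨁ f))
    (hfd : ∀ X Y : C, FiniteDimensional k (X ⟶ Y))
    (hend : ∀ X : C, Simple X → Module.finrank k (X ⟶ X) = 1)
    {Z : C} (h : Module.finrank k (Z ⟶ Z) = 1) : Simple Z := by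
  haveI := hfd
  obtain ⟨n, f, hsimp, ⟨φ⟩⟩ := hss Z
  match n, f, hsimp, φ with
  | 0, f, hsimp, φ =>
    exfalso
    apply aux_id_ne_zero h
    have hb : 𝟙 (⨁ f) = 0 := by
      apply biproduct.hom_ext
      intro i
      exact i.elim0
    calc 𝟙 Z = φ.hom ≫ 𝟙 (⨁ f) ≫ φ.inv := by simp
    _ = 0 := by rw [hb]; simp
  | 1, f, hsimp, φ =>
    have ψ : (⨁ f) ≅ f 0 := by
      refine ⟨biproduct.π f 0, biproduct.ι f 0, ?_, by simp⟩
      apply biproduct.hom_ext'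
      intro i
      have : i = 0 := Subsingleton.elim _ _
      subst this
      simp
    haveI := hsimp 0
    exact Simple.of_iso (φ ≪≫ ψ)
  | (n+2), f, hsimp, φ =>
    exfalso
    set E : Fin 2 → (Z ⟶ Z) := fun j =>
      φ.hom ≫ biproduct.π f ⟨j, by omega⟩ ≫ biproduct.ι f ⟨j, by omega⟩ ≫ φ.inv with hE
    have hid : ∀ (i : Fin (n+2)), 𝟙 (f i) ≠ 0 := fun i => aux_id_ne_zero (hend _ (hsimp i))
    have hli : LinearIndependent k E := by
      rw [show E = ![E 0, E 1] by funext j; fin_cases j <;> rfl]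
      apply LinearIndependent.pair_iff.mpr
      intro s t hst
      have h0 := congrArg (fun g => (biproduct.ι f ⟨0, by omega⟩ ≫ φ.inv) ≫ g ≫
          (φ.hom ≫ biproduct.π f ⟨0, by omega⟩)) hst
      have h1 := congrArg (fun g => (biproduct.ι f ⟨1, by omega⟩ ≫ φ.inv) ≫ g ≫
          (φ.hom ≫ biproduct.π f ⟨1, by omega⟩)) hst
      simp only [hE, Preadditive.add_comp, Preadditive.comp_add, Linear.smul_comp,
        Linear.comp_smul, Category.assoc, Iso.inv_hom_id_assoc, Iso.hom_inv_id_assoc,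
        Limits.zero_comp, Limits.comp_zero] at h0 h1
      simp only [biproduct.ι_π, biproduct.ι_π_assoc] at h0 h1
      have hne01 : (⟨0, by omega⟩ : Fin (n+2)) ≠ ⟨((1 : Fin 2) : ℕ), by omega⟩ :=
        Fin.ne_of_val_ne (by show (0:ℕ) ≠ 1; decide)
      have hne10 : (⟨1, by omega⟩ : Fin (n+2)) ≠ ⟨((0 : Fin 2) : ℕ), by omega⟩ :=
        Fin.ne_of_val_ne (by show (1:ℕ) ≠ 0; decide)
      rw [dif_neg hne01, dif_neg hne01.symm] at h0
      rw [dif_neg hne10, dif_neg hne10.symm] at h1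
      norm_num [Fin.ext_iff] at h0 h1
      constructor
      · rcases h0 with hs | hzz
        · exact hs
        · exact absurd hzz (hid _)
      · rcases h1 with hs | hzz
        · exact hs
        · exact absurd hzz (hid _)
    have hc := hli.fintype_card_le_finrank
    rw [h] at hc
    simp at hc

/-! ### Conjugation by an object isomorphic to the unit -/

theorem aux_conj {A Z Z' : C} (β : A ≅ 𝟙_ C) (t : Z ⟶ Z') :
    (λ_ Z).inv ≫ (β.inv ▷ Z) ≫ (A ◁ t) ≫ (β.hom ▷ Z') ≫ (λ_ Z').hom = t := by
  rw [← whisker_exchange_assoc]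
  simp

theorem aux_conj2 {P Q Z Z' : C} (β : P ⊗ Q ≅ 𝟙_ C) (t : Z ⟶ Z') :
    (λ_ Z).inv ≫ (β.inv ▷ Z) ≫ (α_ P Q Z).hom ≫ (P ◁ (Q ◁ t)) ≫ (α_ P Q Z').inv ≫
      (β.hom ▷ Z') ≫ (λ_ Z').hom = t := by
  have h := aux_conj β t
  rw [tensor_whiskerLeft] at h
  simp only [Category.assoc] at h
  exact h

theorem aux_conj_right {A Z Z' : C} (β : A ≅ 𝟙_ C) (t : Z ⟶ Z') :
    (ρ_ Z).inv ≫ (Z ◁ β.inv) ≫ (t ▷ A) ≫ (Z' ◁ β.hom) ≫ (ρ_ Z').hom = t := by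
  rw [whisker_exchange_assoc]
  simp

theorem aux_conj2_right {P Q Z Z' : C} (β : P ⊗ Q ≅ 𝟙_ C) (t : Z ⟶ Z') :
    (ρ_ Z).inv ≫ (Z ◁ β.inv) ≫ (α_ Z P Q).inv ≫ ((t ▷ P) ▷ Q) ≫ (α_ Z' P Q).hom ≫
      (Z' ◁ β.hom) ≫ (ρ_ Z').hom = t := by
  have h := aux_conj_right β t
  rw [whiskerRight_tensor] at h
  simp only [Category.assoc] at h
  exact h

/-! ### Tensoring with an invertible object preserves simplicity -/

theorem aux_finrank_end_tensor_left
    (hfd : ∀ X Y : C, FiniteDimensional k (X ⟶ Y))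
    {g X : C} (W : C) (β1 : g ⊗ W ≅ 𝟙_ C) (β2 : W ⊗ g ≅ 𝟙_ C)
    (hX : Module.finrank k (X ⟶ X) = 1) :
    Module.finrank k ((g ⊗ X) ⟶ (g ⊗ X)) = 1 := by
  haveI := hfd
  have hrec : ∀ h' : (g ⊗ X) ⟶ (g ⊗ X),
      (λ_ (g ⊗ X)).inv ≫ (β1.inv ▷ (g ⊗ X)) ≫ (α_ g W (g ⊗ X)).hom ≫
        (g ◁ (W ◁ h')) ≫ (α_ g W (g ⊗ X)).inv ≫ (β1.hom ▷ (g ⊗ X)) ≫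
        (λ_ (g ⊗ X)).hom = h' := fun h' => aux_conj2 β1 h'
  have hinj : Function.Injective (fun h' : (g ⊗ X) ⟶ (g ⊗ X) => W ◁ h') := by
    intro a b hab
    have := congrArg (fun t => (λ_ (g ⊗ X)).inv ≫ (β1.inv ▷ (g ⊗ X)) ≫
      (α_ g W (g ⊗ X)).hom ≫ (g ◁ t) ≫ (α_ g W (g ⊗ X)).inv ≫
      (β1.hom ▷ (g ⊗ X)) ≫ (λ_ (g ⊗ X)).hom) hab
    simpa only [hrec a, hrec b] using this
  have hle : Module.finrank k ((g ⊗ X) ⟶ (g ⊗ X)) ≤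
      Module.finrank k ((W ⊗ (g ⊗ X)) ⟶ (W ⊗ (g ⊗ X))) := by
    exact LinearMap.finrank_le_finrank_of_injective
      (f := { toFun := fun h' : (g ⊗ X) ⟶ (g ⊗ X) => W ◁ h',
              map_add' := fun a b => by simp,
              map_smul' := fun c a => by simp }) hinj
  have ψ : X ≅ W ⊗ (g ⊗ X) :=
    (λ_ X).symm ≪≫ (whiskerRightIso β2.symm X) ≪≫ α_ W g X
  have heq : Module.finrank k ((W ⊗ (g ⊗ X)) ⟶ (W ⊗ (g ⊗ X))) =
      Module.finrank k (X ⟶ X) :=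
    LinearEquiv.finrank_eq (Linear.homCongr k ψ.symm ψ.symm)
  rw [heq, hX] at hle
  have hne : 𝟙 (g ⊗ X) ≠ 0 := by
    intro h0
    apply aux_id_ne_zero hX
    have h2 := aux_conj2 β2 (𝟙 X)
    rw [MonoidalCategory.whiskerLeft_id, h0, MonoidalPreadditive.whiskerLeft_zero] at h2
    simp only [Limits.zero_comp, Limits.comp_zero] at h2
    exact h2.symm
  have hpos : 0 < Module.finrank k ((g ⊗ X) ⟶ (g ⊗ X)) :=
    Module.finrank_pos_iff.mpr (nontrivial_of_ne _ _ hne)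
  omega

theorem aux_finrank_end_tensor_right
    (hfd : ∀ X Y : C, FiniteDimensional k (X ⟶ Y))
    {g X : C} (W : C) (β1 : g ⊗ W ≅ 𝟙_ C) (β2 : W ⊗ g ≅ 𝟙_ C)
    (hX : Module.finrank k (X ⟶ X) = 1) :
    Module.finrank k ((X ⊗ g) ⟶ (X ⊗ g)) = 1 := by
  haveI := hfd
  have hrec : ∀ h' : (X ⊗ g) ⟶ (X ⊗ g),
      (ρ_ (X ⊗ g)).inv ≫ ((X ⊗ g) ◁ β2.inv) ≫ (α_ (X ⊗ g) W g).inv ≫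
        ((h' ▷ W) ▷ g) ≫ (α_ (X ⊗ g) W g).hom ≫ ((X ⊗ g) ◁ β2.hom) ≫
        (ρ_ (X ⊗ g)).hom = h' := fun h' => aux_conj2_right β2 h'
  have hinj : Function.Injective (fun h' : (X ⊗ g) ⟶ (X ⊗ g) => h' ▷ W) := by
    intro a b hab
    have := congrArg (fun t => (ρ_ (X ⊗ g)).inv ≫ ((X ⊗ g) ◁ β2.inv) ≫
      (α_ (X ⊗ g) W g).inv ≫ (t ▷ g) ≫ (α_ (X ⊗ g) W g).hom ≫
      ((X ⊗ g) ◁ β2.hom) ≫ (ρ_ (X ⊗ g)).hom) hab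
    simpa only [hrec a, hrec b] using this
  have hle : Module.finrank k ((X ⊗ g) ⟶ (X ⊗ g)) ≤
      Module.finrank k (((X ⊗ g) ⊗ W) ⟶ ((X ⊗ g) ⊗ W)) := by
    exact LinearMap.finrank_le_finrank_of_injective
      (f := { toFun := fun h' : (X ⊗ g) ⟶ (X ⊗ g) => h' ▷ W,
              map_add' := fun a b => by simp,
              map_smul' := fun c a => by simp }) hinj
  have ψ : X ≅ (X ⊗ g) ⊗ W :=
    (ρ_ X).symm ≪≫ (whiskerLeftIso X β1.symm) ≪≫ (α_ X g W).symm
  have heq : Module.finrank k (((X ⊗ g) ⊗ W) ⟶ ((X ⊗ g) ⊗ W)) =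
      Module.finrank k (X ⟶ X) :=
    LinearEquiv.finrank_eq (Linear.homCongr k ψ.symm ψ.symm)
  rw [heq, hX] at hle
  have hne : 𝟙 (X ⊗ g) ≠ 0 := by
    intro h0
    apply aux_id_ne_zero hX
    have h2 := aux_conj2_right β1 (𝟙 X)
    rw [MonoidalCategory.id_whiskerRight, h0, MonoidalPreadditive.zero_whiskerRight] at h2
    simp only [Limits.zero_comp, Limits.comp_zero] at h2
    exact h2.symm
  have hpos : 0 < Module.finrank k ((X ⊗ g) ⟶ (X ⊗ g)) :=
    Module.finrank_pos_iff.mpr (nontrivial_of_ne _ _ hne)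
  omega

theorem aux_simple_tensor_left
    (hss : ∀ X : C, ∃ (n : ℕ) (f : Fin n → C), (∀ i, Simple (f i)) ∧ Nonempty (X ≅ ⨁ f))
    (hfd : ∀ X Y : C, FiniteDimensional k (X ⟶ Y))
    (hend : ∀ X : C, Simple X → Module.finrank k (X ⟶ X) = 1)
    {g X : C} (hg : IsInvertibleObj g) (hX : Simple X) : Simple (g ⊗ X) := by
  obtain ⟨W, ⟨β1⟩, ⟨β2⟩⟩ := hg
  exact aux_simple_of_finrank hss hfd hend
    (aux_finrank_end_tensor_left (k := k) hfd W β1 β2 (hend X hX))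

theorem aux_simple_tensor_right
    (hss : ∀ X : C, ∃ (n : ℕ) (f : Fin n → C), (∀ i, Simple (f i)) ∧ Nonempty (X ≅ ⨁ f))
    (hfd : ∀ X Y : C, FiniteDimensional k (X ⟶ Y))
    (hend : ∀ X : C, Simple X → Module.finrank k (X ⟶ X) = 1)
    {g X : C} (hg : IsInvertibleObj g) (hX : Simple X) : Simple (X ⊗ g) := by
  obtain ⟨W, ⟨β1⟩, ⟨β2⟩⟩ := hg
  exact aux_simple_of_finrank hss hfd hend
    (aux_finrank_end_tensor_right (k := k) hfd W β1 β2 (hend X hX))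

theorem aux_inv_tensor {X Y : C} (hX : IsInvertibleObj X) (hY : IsInvertibleObj Y) :
    IsInvertibleObj (X ⊗ Y) := by
  obtain ⟨X', ⟨βX1⟩, ⟨βX2⟩⟩ := hX
  obtain ⟨Y', ⟨βY1⟩, ⟨βY2⟩⟩ := hY
  refine ⟨Y' ⊗ X', ⟨?_⟩, ⟨?_⟩⟩
  · exact (α_ X Y (Y' ⊗ X')) ≪≫ whiskerLeftIso X ((α_ Y Y' X').symm) ≪≫
      whiskerLeftIso X (whiskerRightIso βY1 X') ≪≫ whiskerLeftIso X (λ_ X') ≪≫ βX1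
  · exact (α_ Y' X' (X ⊗ Y)) ≪≫ whiskerLeftIso Y' ((α_ X' X Y).symm) ≪≫
      whiskerLeftIso Y' (whiskerRightIso βX2 Y) ≪≫ whiskerLeftIso Y' (λ_ Y) ≪≫ βY2

/-! ### Sections of nonzero maps to the unit -/

theorem aux_split_epi_to_unit
    (hss : ∀ X : C, ∃ (n : ℕ) (f : Fin n → C), (∀ i, Simple (f i)) ∧ Nonempty (X ≅ ⨁ f))
    (hend : ∀ X : C, Simple X → Module.finrank k (X ⟶ X) = 1)
    (hhom : ∀ X Y : C, Simple X → Simple Y → ¬ Nonempty (X ≅ Y) → ∀ f : X ⟶ Y, f = 0)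
    (hunit : Simple (𝟙_ C))
    {Z : C} (e : Z ⟶ 𝟙_ C) (he : e ≠ 0) : ∃ s : 𝟙_ C ⟶ Z, s ≫ e = 𝟙 (𝟙_ C) := by
  obtain ⟨n, f, hsimp, ⟨φ⟩⟩ := hss Z
  have hne : φ.inv ≫ e ≠ 0 := by
    intro h0
    apply he
    have : e = φ.hom ≫ (φ.inv ≫ e) := by simp
    rw [this, h0, Limits.comp_zero]
  have hex : ∃ i, biproduct.ι f i ≫ (φ.inv ≫ e) ≠ 0 := by
    by_contra hall
    push_neg at hall
    apply hne
    apply biproduct.hom_ext'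
    intro i
    rw [show biproduct.ι f i ≫ (0 : ⨁ f ⟶ 𝟙_ C) = 0 from Limits.comp_zero, ← hall i]
  obtain ⟨i, hi⟩ := hex
  haveI : IsIso (biproduct.ι f i ≫ φ.inv ≫ e) := by
    apply aux_isIso_of_ne_zero hend hhom (hsimp i) hunit
    simpa using hi
  refine ⟨inv (biproduct.ι f i ≫ φ.inv ≫ e) ≫ biproduct.ι f i ≫ φ.inv, ?_⟩
  simp

/-! ### Snake composites and the exchange identities -/

/-- the right-handed "snake" partial composite -/
def snkR (M Md : C) (e₁ : Md ⊗ M ⟶ 𝟙_ C) {S : C} (u : S ⟶ M ⊗ Md) : S ⊗ M ⟶ M :=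
  (u ▷ M) ≫ (α_ M Md M).hom ≫ (M ◁ e₁) ≫ (ρ_ M).hom

/-- the left-handed "snake" partial composite -/
def snkL (M Md : C) (e₁ : Md ⊗ M ⟶ 𝟙_ C) {S : C} (u : S ⟶ M ⊗ Md) : Md ⊗ S ⟶ Md :=
  (Md ◁ u) ≫ (α_ Md M Md).inv ≫ (e₁ ▷ Md) ≫ (λ_ Md).hom

theorem aux_star {S T M Md : C} (e₁ : Md ⊗ M ⟶ 𝟙_ C) (u : S ⟶ M ⊗ Md) (Q : T ⊗ M ⟶ M) :
    (((T ◁ u) ≫ (α_ T M Md).inv ≫ (Q ▷ Md)) ▷ M) ≫ (α_ M Md M).hom ≫ (M ◁ e₁) ≫ (ρ_ M).hom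
      = (α_ T S M).hom ≫ (T ◁ ((u ▷ M) ≫ (α_ M Md M).hom ≫ (M ◁ e₁) ≫ (ρ_ M).hom)) ≫ Q := by
  simp only [comp_whiskerRight, Category.assoc, MonoidalCategory.whiskerLeft_comp]
  rw [associator_naturality_left_assoc, ← whisker_exchange_assoc, rightUnitor_naturality]
  rw [← associator_naturality_middle_assoc]
  rw [tensor_whiskerLeft_symm T M e₁]
  simp

theorem aux_star' {S T M Md : C} (e₁ : Md ⊗ M ⟶ 𝟙_ C) (u : S ⟶ M ⊗ Md) (Q : Md ⊗ T ⟶ Md) :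
    (Md ◁ ((u ▷ T) ≫ (α_ M Md T).hom ≫ (M ◁ Q))) ≫ (α_ Md M Md).inv ≫ (e₁ ▷ Md) ≫ (λ_ Md).hom
      = (α_ Md S T).inv ≫
        (((Md ◁ u) ≫ (α_ Md M Md).inv ≫ (e₁ ▷ Md) ≫ (λ_ Md).hom) ▷ T) ≫ Q := by
  simp only [comp_whiskerRight, Category.assoc, MonoidalCategory.whiskerLeft_comp]
  rw [associator_inv_naturality_right_assoc, whisker_exchange_assoc, leftUnitor_naturality]
  rw [← associator_inv_naturality_middle_assoc]
  rw [whiskerRight_tensor e₁ Md T]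
  simp

theorem aux_star_snk {S T M Md : C} (e₁ : Md ⊗ M ⟶ 𝟙_ C) (u : S ⟶ M ⊗ Md) (Q : T ⊗ M ⟶ M) :
    snkR M Md e₁ ((T ◁ u) ≫ (α_ T M Md).inv ≫ (Q ▷ Md))
      = (α_ T S M).hom ≫ (T ◁ snkR M Md e₁ u) ≫ Q :=
  aux_star e₁ u Q

theorem aux_star_snk' {S T M Md : C} (e₁ : Md ⊗ M ⟶ 𝟙_ C) (u : S ⟶ M ⊗ Md) (Q : Md ⊗ T ⟶ Md) :
    snkL M Md e₁ ((u ▷ T) ≫ (α_ M Md T).hom ≫ (M ◁ Q))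
      = (α_ Md S T).inv ≫ (snkL M Md e₁ u ▷ T) ≫ Q :=
  aux_star' e₁ u Q

theorem aux_snk_comp {M Md S S' : C} (e₁ : Md ⊗ M ⟶ 𝟙_ C) (w : S' ⟶ S) (u : S ⟶ M ⊗ Md) :
    snkR M Md e₁ (w ≫ u) = (w ▷ M) ≫ snkR M Md e₁ u := by
  simp [snkR]

theorem aux_snk_comp' {M Md S S' : C} (e₁ : Md ⊗ M ⟶ 𝟙_ C) (w : S' ⟶ S) (u : S ⟶ M ⊗ Md) :
    snkL M Md e₁ (w ≫ u) = (Md ◁ w) ≫ snkL M Md e₁ u := by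
  simp [snkL]

theorem aux_snk_smul {M Md S : C} (e₁ : Md ⊗ M ⟶ 𝟙_ C) (d : k) (u : S ⟶ M ⊗ Md) :
    snkR M Md e₁ (d • u) = d • snkR M Md e₁ u := by
  simp [snkR]

theorem aux_snk_smul' {M Md S : C} (e₁ : Md ⊗ M ⟶ 𝟙_ C) (d : k) (u : S ⟶ M ⊗ Md) :
    snkL M Md e₁ (d • u) = d • snkL M Md e₁ u := by
  simp [snkL]


/-! ### The main nondegeneracy argument (right-handed version) -/

theorem aux_main
    (hss : ∀ X : C, ∃ (n : ℕ) (f : Fin n → C), (∀ i, Simple (f i)) ∧ Nonempty (X ≅ ⨁ f))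
    (hfin : ∃ (n : ℕ) (f : Fin n → C), ∀ X : C, Simple X → ∃ i, Nonempty (X ≅ f i))
    (hfd : ∀ X Y : C, FiniteDimensional k (X ⟶ Y))
    (hend : ∀ X : C, Simple X → Module.finrank k (X ⟶ X) = 1)
    (hhom : ∀ X Y : C, Simple X → Simple Y → ¬ Nonempty (X ≅ Y) → ∀ f : X ⟶ Y, f = 0)
    (hunit : Simple (𝟙_ C))
    {Γ : Type*} [Group Γ] (deg : C → Γ)
    (hdeg_mul : ∀ X Y Z : C, Simple X → Simple Y → Simple Z →
      (∃ f : Z ⟶ X ⊗ Y, f ≠ 0) → deg Z = deg X * deg Y)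
    (hpointed : ∀ X : C, Simple X → deg X = 1 → IsInvertibleObj X)
    (M Md : C) (hM : Simple M) (hMd : Simple Md)
    (h1 : Module.finrank k ((M ⊗ Md) ⟶ 𝟙_ C) = 1)
    (c₁ : 𝟙_ C ⟶ M ⊗ Md) (hc₁ : c₁ ≠ 0)
    (e₁ : (Md ⊗ M) ⟶ 𝟙_ C) (he₁ : e₁ ≠ 0) :
    snkR M Md e₁ c₁ ≠ 0 := by
  haveI := hfd
  intro hz
  obtain ⟨nn, f, hsimp, ⟨φ⟩⟩ := hss (M ⊗ Md)
  obtain ⟨s, hs⟩ := aux_split_epi_to_unit hss hend hhom hunit e₁ he₁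
  have hTF : ((ρ_ M).inv ≫ (M ◁ s) ≫ (α_ M Md M).inv) ≫
      ((α_ M Md M).hom ≫ (M ◁ e₁) ≫ (ρ_ M).hom) = 𝟙 M := by
    simp only [Category.assoc, Iso.inv_hom_id_assoc]
    rw [← MonoidalCategory.whiskerLeft_comp_assoc, hs]
    simp
  have hcomp : ∃ i : Fin nn, snkR M Md e₁ (biproduct.ι f i ≫ φ.inv) ≠ 0 := by
    by_contra hall
    push_neg at hall
    have key : φ.inv = ∑ j, (biproduct.π f j ≫ biproduct.ι f j ≫ φ.inv) := by
      simp only [← Category.assoc, ← Preadditive.sum_comp, biproduct.total, Category.id_comp]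
    have hFzero : (φ.inv ▷ M) ≫ (α_ M Md M).hom ≫ (M ◁ e₁) ≫ (ρ_ M).hom = 0 := by
      rw [key, sum_whiskerRight, Preadditive.sum_comp]
      apply Finset.sum_eq_zero
      intro j _
      have h2 : (biproduct.π f j ≫ biproduct.ι f j ≫ φ.inv) ▷ M ≫
          (α_ M Md M).hom ≫ (M ◁ e₁) ≫ (ρ_ M).hom
          = (biproduct.π f j ▷ M) ≫ snkR M Md e₁ (biproduct.ι f j ≫ φ.inv) := by
        simp [snkR, comp_whiskerRight]
      rw [h2, hall j, Limits.comp_zero]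
    apply aux_id_ne_zero (hend M hM)
    calc 𝟙 M = ((ρ_ M).inv ≫ (M ◁ s) ≫ (α_ M Md M).inv) ≫
        ((α_ M Md M).hom ≫ (M ◁ e₁) ≫ (ρ_ M).hom) := hTF.symm
    _ = ((ρ_ M).inv ≫ (M ◁ s) ≫ (α_ M Md M).inv ≫ (φ.hom ▷ M)) ≫
        ((φ.inv ▷ M) ≫ (α_ M Md M).hom ≫ (M ◁ e₁) ≫ (ρ_ M).hom) := by
      simp only [Category.assoc, hom_inv_whiskerRight_assoc]
    _ = 0 := by
      rw [show (φ.inv ▷ M) ≫ (α_ M Md M).hom ≫ (M ◁ e₁) ≫ (ρ_ M).hom = 0 from hFzero,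
        Limits.comp_zero]
  obtain ⟨i, hi⟩ := hcomp
  set g := f i with hg
  set u₀ : g ⟶ M ⊗ Md := biproduct.ι f i ≫ φ.inv with hu₀
  have hgsimple : Simple g := hsimp i
  have hr₀ : u₀ ≫ (φ.hom ≫ biproduct.π f i) = 𝟙 g := by simp [hu₀]; rfl
  have hu₀ne : u₀ ≠ 0 := by
    intro h0
    have h3 := hr₀
    rw [h0, Limits.zero_comp] at h3
    exact aux_id_ne_zero (hend g hgsimple) h3.symm
  have hidunit : 𝟙 (𝟙_ C) ≠ 0 := aux_id_ne_zero (hend _ hunit)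
  have hdeg1 : deg (𝟙_ C) = 1 := by
    have hlne : (λ_ (𝟙_ C)).inv ≠ 0 := by
      intro h0
      apply hidunit
      rw [← (λ_ (𝟙_ C)).inv_hom_id, h0, Limits.zero_comp]
    have hmm := hdeg_mul (𝟙_ C) (𝟙_ C) (𝟙_ C) hunit hunit hunit ⟨(λ_ (𝟙_ C)).inv, hlne⟩
    have h2 : deg (𝟙_ C) * 1 = deg (𝟙_ C) * deg (𝟙_ C) := by rw [mul_one]; exact hmm
    exact (mul_left_cancel h2).symm
  have hdegg : deg g = 1 := by
    have e1 : deg (𝟙_ C) = deg M * deg Md := hdeg_mul M Md (𝟙_ C) hM hMd hunit ⟨c₁, hc₁⟩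
    have e2 : deg g = deg M * deg Md := hdeg_mul M Md g hM hMd hgsimple ⟨u₀, hu₀ne⟩
    rw [e2, ← e1, hdeg1]
  have hginv : IsInvertibleObj g := hpointed g hgsimple hdegg
  have hgM : Simple (g ⊗ M) := aux_simple_tensor_left hss hfd hend hginv hM
  set P₀ : g ⊗ M ⟶ M := snkR M Md e₁ u₀ with hP₀
  haveI hP₀iso : IsIso P₀ := aux_isIso_of_ne_zero hend hhom hgM hM P₀ hi
  -- the tower of tensor powers of g
  let h : ℕ → C := fun n => Nat.rec g (fun _ ih => g ⊗ ih) n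
  let u : ∀ n : ℕ, (h n ⟶ M ⊗ Md) := fun n =>
    Nat.rec (motive := fun n => h n ⟶ M ⊗ Md) u₀
      (fun n ihu => (g ◁ ihu) ≫ (α_ g M Md).inv ≫ (P₀ ▷ Md)) n
  have hu_succ : ∀ n, u (n+1) = (g ◁ u n) ≫ (α_ g M Md).inv ≫ (P₀ ▷ Md) := fun n => rfl
  have hsnk_iso : ∀ n, IsIso (snkR M Md e₁ (u n)) := by
    intro n
    induction n with
    | zero => exact hP₀iso
    | succ n ih =>
      rw [hu_succ, aux_star_snk]
      haveI := ih
      infer_instance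
  have hsimpl : ∀ n, Simple (h n) := by
    intro n
    induction n with
    | zero => exact hgsimple
    | succ n ih => exact aux_simple_tensor_left hss hfd hend hginv ih
  have hinvl : ∀ n, IsInvertibleObj (h n) := by
    intro n
    induction n with
    | zero => exact hginv
    | succ n ih => exact aux_inv_tensor hginv ih
  have hsplit : ∀ a b : ℕ, Nonempty (h (a + b + 1) ≅ h a ⊗ h b) := by
    intro a
    induction a with
    | zero =>
      intro b
      exact ⟨eqToIso (congrArg h (by omega : 0 + b + 1 = b + 1))⟩
    | succ a ih =>
      intro b
      obtain ⟨eab⟩ := ih b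
      exact ⟨eqToIso (congrArg h (by omega : (a+1) + b + 1 = (a + b + 1) + 1)) ≪≫
        whiskerLeftIso g eab ≪≫ (α_ g (h a) (h b)).symm⟩
  -- the contradiction from an isomorphism h a ≅ h b with a < b
  have main2 : ∀ n m : ℕ, n < m → Nonempty (h n ≅ h m) → False := by
    intro n m hnm hne
    obtain ⟨e⟩ := hne
    obtain ⟨esplit⟩ := hsplit (m - n - 1) n
    have hm : h m = h ((m - n - 1) + n + 1) := congrArg h (show m = (m - n - 1) + n + 1 by omega)
    obtain ⟨W', ⟨βn1⟩, ⟨βn2⟩⟩ := hinvl n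
    set j := m - n - 1 with hj
    have ψ : 𝟙_ C ≅ h j :=
      βn1.symm ≪≫ whiskerRightIso (e ≪≫ eqToIso hm ≪≫ esplit) W' ≪≫
        (α_ (h j) (h n) W') ≪≫ whiskerLeftIso (h j) βn1 ≪≫ (ρ_ (h j))
    have hrank : Module.finrank k (𝟙_ C ⟶ M ⊗ Md) = 1 := by
      rw [aux_finrank_hom_unit hfd hhom hunit f hsimp φ]
      exact h1
    obtain ⟨d, hd⟩ := (finrank_eq_one_iff_of_nonzero' c₁ hc₁).mp hrank (ψ.hom ≫ u j)
    have hzz : snkR M Md e₁ (ψ.hom ≫ u j) = 0 := by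
      rw [← hd, aux_snk_smul, hz, smul_zero]
    rw [aux_snk_comp] at hzz
    haveI := hsnk_iso j
    have hwz : ψ.hom ▷ M = 0 := by
      rw [← Category.comp_id (ψ.hom ▷ M), ← IsIso.hom_inv_id (snkR M Md e₁ (u j)),
        ← Category.assoc, hzz, Limits.zero_comp]
    have hidz : 𝟙 (𝟙_ C ⊗ M) = 0 := by
      rw [← hom_inv_whiskerRight ψ M, hwz, Limits.zero_comp]
    apply aux_id_ne_zero (hend M hM)
    calc 𝟙 M = (λ_ M).inv ≫ 𝟙 (𝟙_ C ⊗ M) ≫ (λ_ M).hom := by simp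
    _ = 0 := by rw [hidz]; simp
  -- pigeonhole
  obtain ⟨N, F, hF⟩ := hfin
  have hidx : ∀ n : ℕ, ∃ i : Fin N, Nonempty (h n ≅ F i) := fun n => hF (h n) (hsimpl n)
  choose idx hidxspec using hidx
  obtain ⟨a, b, hab, heq⟩ := Finite.exists_ne_map_eq_of_infinite idx
  have hiso : Nonempty (h a ≅ h b) :=
    ⟨(hidxspec a).some ≪≫ eqToIso (congrArg F heq) ≪≫ (hidxspec b).some.symm⟩
  rcases lt_or_gt_of_ne hab with h' | h'
  · exact main2 a b h' hiso
  · exact main2 b a h' ⟨hiso.some.symm⟩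


/-! ### The main nondegeneracy argument (left-handed version) -/

theorem aux_main'
    (hss : ∀ X : C, ∃ (n : ℕ) (f : Fin n → C), (∀ i, Simple (f i)) ∧ Nonempty (X ≅ ⨁ f))
    (hfin : ∃ (n : ℕ) (f : Fin n → C), ∀ X : C, Simple X → ∃ i, Nonempty (X ≅ f i))
    (hfd : ∀ X Y : C, FiniteDimensional k (X ⟶ Y))
    (hend : ∀ X : C, Simple X → Module.finrank k (X ⟶ X) = 1)
    (hhom : ∀ X Y : C, Simple X → Simple Y → ¬ Nonempty (X ≅ Y) → ∀ f : X ⟶ Y, f = 0)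
    (hunit : Simple (𝟙_ C))
    {Γ : Type*} [Group Γ] (deg : C → Γ)
    (hdeg_mul : ∀ X Y Z : C, Simple X → Simple Y → Simple Z →
      (∃ f : Z ⟶ X ⊗ Y, f ≠ 0) → deg Z = deg X * deg Y)
    (hpointed : ∀ X : C, Simple X → deg X = 1 → IsInvertibleObj X)
    (M Md : C) (hM : Simple M) (hMd : Simple Md)
    (h1 : Module.finrank k ((M ⊗ Md) ⟶ 𝟙_ C) = 1)
    (c₁ : 𝟙_ C ⟶ M ⊗ Md) (hc₁ : c₁ ≠ 0)
    (e₁ : (Md ⊗ M) ⟶ 𝟙_ C) (he₁ : e₁ ≠ 0) :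
    snkL M Md e₁ c₁ ≠ 0 := by
  haveI := hfd
  intro hz
  obtain ⟨nn, f, hsimp, ⟨φ⟩⟩ := hss (M ⊗ Md)
  obtain ⟨s, hs⟩ := aux_split_epi_to_unit hss hend hhom hunit e₁ he₁
  have hTF : ((λ_ Md).inv ≫ (s ▷ Md) ≫ (α_ Md M Md).hom) ≫
      ((α_ Md M Md).inv ≫ (e₁ ▷ Md) ≫ (λ_ Md).hom) = 𝟙 Md := by
    simp only [Category.assoc, Iso.hom_inv_id_assoc]
    rw [← comp_whiskerRight_assoc, hs]
    simp
  have hcomp : ∃ i : Fin nn, snkL M Md e₁ (biproduct.ι f i ≫ φ.inv) ≠ 0 := by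
    by_contra hall
    push_neg at hall
    have key : φ.inv = ∑ j, (biproduct.π f j ≫ biproduct.ι f j ≫ φ.inv) := by
      simp only [← Category.assoc, ← Preadditive.sum_comp, biproduct.total, Category.id_comp]
    have hFzero : (Md ◁ φ.inv) ≫ (α_ Md M Md).inv ≫ (e₁ ▷ Md) ≫ (λ_ Md).hom = 0 := by
      rw [key, whiskerLeft_sum, Preadditive.sum_comp]
      apply Finset.sum_eq_zero
      intro j _
      have h2 : Md ◁ (biproduct.π f j ≫ biproduct.ι f j ≫ φ.inv) ≫
          (α_ Md M Md).inv ≫ (e₁ ▷ Md) ≫ (λ_ Md).hom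
          = (Md ◁ biproduct.π f j) ≫ snkL M Md e₁ (biproduct.ι f j ≫ φ.inv) := by
        simp [snkL, MonoidalCategory.whiskerLeft_comp]
      rw [h2, hall j, Limits.comp_zero]
    apply aux_id_ne_zero (hend Md hMd)
    calc 𝟙 Md = ((λ_ Md).inv ≫ (s ▷ Md) ≫ (α_ Md M Md).hom) ≫
        ((α_ Md M Md).inv ≫ (e₁ ▷ Md) ≫ (λ_ Md).hom) := hTF.symm
    _ = ((λ_ Md).inv ≫ (s ▷ Md) ≫ (α_ Md M Md).hom ≫ (Md ◁ φ.hom)) ≫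
        ((Md ◁ φ.inv) ≫ (α_ Md M Md).inv ≫ (e₁ ▷ Md) ≫ (λ_ Md).hom) := by
      simp only [Category.assoc, whiskerLeft_hom_inv_assoc]
    _ = 0 := by
      rw [show (Md ◁ φ.inv) ≫ (α_ Md M Md).inv ≫ (e₁ ▷ Md) ≫ (λ_ Md).hom = 0 from hFzero,
        Limits.comp_zero]
  obtain ⟨i, hi⟩ := hcomp
  set g := f i with hg
  set u₀ : g ⟶ M ⊗ Md := biproduct.ι f i ≫ φ.inv with hu₀
  have hgsimple : Simple g := hsimp i
  have hr₀ : u₀ ≫ (φ.hom ≫ biproduct.π f i) = 𝟙 g := by simp [hu₀]; rfl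
  have hu₀ne : u₀ ≠ 0 := by
    intro h0
    have h3 := hr₀
    rw [h0, Limits.zero_comp] at h3
    exact aux_id_ne_zero (hend g hgsimple) h3.symm
  have hidunit : 𝟙 (𝟙_ C) ≠ 0 := aux_id_ne_zero (hend _ hunit)
  have hdeg1 : deg (𝟙_ C) = 1 := by
    have hlne : (λ_ (𝟙_ C)).inv ≠ 0 := by
      intro h0
      apply hidunit
      rw [← (λ_ (𝟙_ C)).inv_hom_id, h0, Limits.zero_comp]
    have hmm := hdeg_mul (𝟙_ C) (𝟙_ C) (𝟙_ C) hunit hunit hunit ⟨(λ_ (𝟙_ C)).inv, hlne⟩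
    have h2 : deg (𝟙_ C) * 1 = deg (𝟙_ C) * deg (𝟙_ C) := by rw [mul_one]; exact hmm
    exact (mul_left_cancel h2).symm
  have hdegg : deg g = 1 := by
    have e1 : deg (𝟙_ C) = deg M * deg Md := hdeg_mul M Md (𝟙_ C) hM hMd hunit ⟨c₁, hc₁⟩
    have e2 : deg g = deg M * deg Md := hdeg_mul M Md g hM hMd hgsimple ⟨u₀, hu₀ne⟩
    rw [e2, ← e1, hdeg1]
  have hginv : IsInvertibleObj g := hpointed g hgsimple hdegg
  have hMdg : Simple (Md ⊗ g) := aux_simple_tensor_right hss hfd hend hginv hMd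
  set P₀ : Md ⊗ g ⟶ Md := snkL M Md e₁ u₀ with hP₀
  haveI hP₀iso : IsIso P₀ := aux_isIso_of_ne_zero hend hhom hMdg hMd P₀ hi
  -- the tower of tensor powers of g
  let h : ℕ → C := fun n => Nat.rec g (fun _ ih => ih ⊗ g) n
  let u : ∀ n : ℕ, (h n ⟶ M ⊗ Md) := fun n =>
    Nat.rec (motive := fun n => h n ⟶ M ⊗ Md) u₀
      (fun n ihu => (ihu ▷ g) ≫ (α_ M Md g).hom ≫ (M ◁ P₀)) n
  have hu_succ : ∀ n, u (n+1) = (u n ▷ g) ≫ (α_ M Md g).hom ≫ (M ◁ P₀) := fun n => rfl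
  have hsnk_iso : ∀ n, IsIso (snkL M Md e₁ (u n)) := by
    intro n
    induction n with
    | zero => exact hP₀iso
    | succ n ih =>
      rw [hu_succ, aux_star_snk']
      haveI := ih
      infer_instance
  have hsimpl : ∀ n, Simple (h n) := by
    intro n
    induction n with
    | zero => exact hgsimple
    | succ n ih => exact aux_simple_tensor_right hss hfd hend hginv ih
  have hinvl : ∀ n, IsInvertibleObj (h n) := by
    intro n
    induction n with
    | zero => exact hginv
    | succ n ih => exact aux_inv_tensor ih hginv
  have hsplit : ∀ b a : ℕ, Nonempty (h (a + b + 1) ≅ h a ⊗ h b) := by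
    intro b
    induction b with
    | zero =>
      intro a
      exact ⟨eqToIso (congrArg h (show a + 0 + 1 = a + 1 by omega))⟩
    | succ b ih =>
      intro a
      obtain ⟨eab⟩ := ih a
      exact ⟨eqToIso (congrArg h (show a + (b+1) + 1 = (a + b + 1) + 1 by omega)) ≪≫
        whiskerRightIso eab g ≪≫ (α_ (h a) (h b) g)⟩
  -- the contradiction from an isomorphism h n ≅ h m with n < m
  have main2 : ∀ n m : ℕ, n < m → Nonempty (h n ≅ h m) → False := by
    intro n m hnm hne
    obtain ⟨e⟩ := hne
    obtain ⟨esplit⟩ := hsplit (m - n - 1) n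
    have hm : h m = h (n + (m - n - 1) + 1) := congrArg h (show m = n + (m - n - 1) + 1 by omega)
    obtain ⟨W', ⟨βn1⟩, ⟨βn2⟩⟩ := hinvl n
    set j := m - n - 1 with hj
    have ψ : 𝟙_ C ≅ h j :=
      βn2.symm ≪≫ whiskerLeftIso W' (e ≪≫ eqToIso hm ≪≫ esplit) ≪≫
        (α_ W' (h n) (h j)).symm ≪≫ whiskerRightIso βn2 (h j) ≪≫ (λ_ (h j))
    have hrank : Module.finrank k (𝟙_ C ⟶ M ⊗ Md) = 1 := by
      rw [aux_finrank_hom_unit hfd hhom hunit f hsimp φ]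
      exact h1
    obtain ⟨d, hd⟩ := (finrank_eq_one_iff_of_nonzero' c₁ hc₁).mp hrank (ψ.hom ≫ u j)
    have hzz : snkL M Md e₁ (ψ.hom ≫ u j) = 0 := by
      rw [← hd, aux_snk_smul', hz, smul_zero]
    rw [aux_snk_comp'] at hzz
    haveI := hsnk_iso j
    have hwz : Md ◁ ψ.hom = 0 := by
      rw [← Category.comp_id (Md ◁ ψ.hom), ← IsIso.hom_inv_id (snkL M Md e₁ (u j)),
        ← Category.assoc, hzz, Limits.zero_comp]
    have hidz : 𝟙 (Md ⊗ 𝟙_ C) = 0 := by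
      rw [← whiskerLeft_hom_inv Md ψ, hwz, Limits.zero_comp]
    apply aux_id_ne_zero (hend Md hMd)
    calc 𝟙 Md = (ρ_ Md).inv ≫ 𝟙 (Md ⊗ 𝟙_ C) ≫ (ρ_ Md).hom := by simp
    _ = 0 := by rw [hidz]; simp
  obtain ⟨N, F, hF⟩ := hfin
  have hidx : ∀ n : ℕ, ∃ i : Fin N, Nonempty (h n ≅ F i) := fun n => hF (h n) (hsimpl n)
  choose idx hidxspec using hidx
  obtain ⟨a, b, hab, heq⟩ := Finite.exists_ne_map_eq_of_infinite idx
  have hiso : Nonempty (h a ≅ h b) :=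
    ⟨(hidxspec a).some ≪≫ eqToIso (congrArg F heq) ≪≫ (hidxspec b).some.symm⟩
  rcases lt_or_gt_of_ne hab with h' | h'
  · exact main2 a b h' hiso
  · exact main2 b a h' ⟨hiso.some.symm⟩

end Stmt5Aux

/-- for nonzero c₁ : 1 → M ⊗ M∨ and e₁ : M∨ ⊗ M → 1, the two triangle
composites (a) M ≅ 1 ⊗ M → (M ⊗ M∨) ⊗ M ≅ M ⊗ (M∨ ⊗ M) → M ⊗ 1 ≅ M and
(b) M∨ ≅ M∨ ⊗ 1 → M∨ ⊗ (M ⊗ M∨) ≅ (M∨ ⊗ M) ⊗ M∨ → 1 ⊗ M∨ ≅ M∨ are isomorphisms. -/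
theorem stmt5 (k : Type*) [Field k] [CharZero k]
    (C : Type*) [Category C] [MonoidalCategory C]
    [Preadditive C] [Linear k C] [MonoidalPreadditive C] [MonoidalLinear k C]
    [HasFiniteBiproducts C]
    -- (i) semisimplicity with finitely many simples, finite-dimensional Homs,
    -- one-dimensional endomorphism rings of simples, no Homs between non-isomorphic simples
    (hss : ∀ X : C, ∃ (n : ℕ) (f : Fin n → C), (∀ i, Simple (f i)) ∧ Nonempty (X ≅ ⨁ f))
    (hfin : ∃ (n : ℕ) (f : Fin n → C), ∀ X : C, Simple X → ∃ i, Nonempty (X ≅ f i))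
    (hfd : ∀ X Y : C, FiniteDimensional k (X ⟶ Y))
    (hend : ∀ X : C, Simple X → Module.finrank k (X ⟶ X) = 1)
    (hhom : ∀ X Y : C, Simple X → Simple Y → ¬ Nonempty (X ≅ Y) → ∀ f : X ⟶ Y, f = 0)
    -- (ii) the unit object is simple
    (hunit : Simple (𝟙_ C))
    -- (iii) weak duality for simple objects
    (hdual : ∀ M : C, Simple M → ∃ Md : C, Simple Md ∧
      Module.finrank k ((M ⊗ Md) ⟶ 𝟙_ C) = 1 ∧
      Module.finrank k ((Md ⊗ M) ⟶ 𝟙_ C) = 1 ∧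
      ∀ Y : C, Simple Y → ¬ Nonempty (Y ≅ Md) →
        (∀ f : (M ⊗ Y) ⟶ 𝟙_ C, f = 0) ∧ (∀ f : (Y ⊗ M) ⟶ 𝟙_ C, f = 0))
    -- (iv) a grading of the simple objects by a finite group Γ
    (Γ : Type*) [Group Γ] [Finite Γ] (deg : C → Γ)
    (hdeg_iso : ∀ X Y : C, Simple X → Simple Y → Nonempty (X ≅ Y) → deg X = deg Y)
    (hdeg_mul : ∀ X Y Z : C, Simple X → Simple Y → Simple Z →
      (∃ f : Z ⟶ X ⊗ Y, f ≠ 0) → deg Z = deg X * deg Y)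
    (hpointed : ∀ X : C, Simple X → deg X = 1 → IsInvertibleObj X)
    -- M is simple with weak dual Md as in (iii)
    (M Md : C) (hM : Simple M) (hMd : Simple Md)
    (h1 : Module.finrank k ((M ⊗ Md) ⟶ 𝟙_ C) = 1)
    (h2 : Module.finrank k ((Md ⊗ M) ⟶ 𝟙_ C) = 1)
    (h3 : ∀ Y : C, Simple Y → ¬ Nonempty (Y ≅ Md) →
      (∀ f : (M ⊗ Y) ⟶ 𝟙_ C, f = 0) ∧ (∀ f : (Y ⊗ M) ⟶ 𝟙_ C, f = 0))
    -- nonzero morphisms c₁ : 1 → M ⊗ M∨ and e₁ : M∨ ⊗ M → 1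
    (c₁ : 𝟙_ C ⟶ M ⊗ Md) (hc₁ : c₁ ≠ 0)
    (e₁ : (Md ⊗ M) ⟶ 𝟙_ C) (he₁ : e₁ ≠ 0) :
    IsIso ((λ_ M).inv ≫ (c₁ ▷ M) ≫ (α_ M Md M).hom ≫ (M ◁ e₁) ≫ (ρ_ M).hom) ∧
    IsIso ((ρ_ Md).inv ≫ (Md ◁ c₁) ≫ (α_ Md M Md).inv ≫ (e₁ ▷ Md) ≫ (λ_ Md).hom) := by
  haveI := hM
  haveI := hMd
  have hA : snkR M Md e₁ c₁ ≠ 0 :=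
    aux_main hss hfin hfd hend hhom hunit deg hdeg_mul hpointed M Md hM hMd h1 c₁ hc₁ e₁ he₁
  have hB : snkL M Md e₁ c₁ ≠ 0 :=
    aux_main' hss hfin hfd hend hhom hunit deg hdeg_mul hpointed M Md hM hMd h1 c₁ hc₁ e₁ he₁
  haveI hsA : Simple (𝟙_ C ⊗ M) := Simple.of_iso (λ_ M)
  haveI hsB : Simple (Md ⊗ 𝟙_ C) := Simple.of_iso (ρ_ Md)
  haveI : IsIso (snkR M Md e₁ c₁) := aux_isIso_of_ne_zero hend hhom hsA hM _ hA
  haveI : IsIso (snkL M Md e₁ c₁) := aux_isIso_of_ne_zero hend hhom hsB hMd _ hB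
  constructor
  · show IsIso ((λ_ M).inv ≫ snkR M Md e₁ c₁)
    infer_instance
  · show IsIso ((ρ_ Md).inv ≫ snkL M Md e₁ c₁)
    infer_instance
end

section
/- If M and L are nonzero objects of C, then M ⊗ L is a nonzero object of C. -/
open CategoryTheory MonoidalCategory Limits

/-- if M and L are nonzero objects of C, then M ⊗ L is nonzero. -/
theorem stmt6 (k : Type*) [Field k] [CharZero k]
    (C : Type*) [Category C] [MonoidalCategory C]
    [Preadditive C] [Linear k C] [MonoidalPreadditive C] [MonoidalLinear k C]
    [HasFiniteBiproducts C]
    -- (i) semisimplicity with finitely many simples, finite-dimensional Homs,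
    -- one-dimensional endomorphism rings of simples, no Homs between non-isomorphic simples
    (hss : ∀ X : C, ∃ (n : ℕ) (f : Fin n → C), (∀ i, Simple (f i)) ∧ Nonempty (X ≅ ⨁ f))
    (hfin : ∃ (n : ℕ) (f : Fin n → C), ∀ X : C, Simple X → ∃ i, Nonempty (X ≅ f i))
    (hfd : ∀ X Y : C, FiniteDimensional k (X ⟶ Y))
    (hend : ∀ X : C, Simple X → Module.finrank k (X ⟶ X) = 1)
    (hhom : ∀ X Y : C, Simple X → Simple Y → ¬ Nonempty (X ≅ Y) → ∀ f : X ⟶ Y, f = 0)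
    -- (ii) the unit object is simple
    (hunit : Simple (𝟙_ C))
    -- (iii) weak duality for simple objects
    (hdual : ∀ M : C, Simple M → ∃ Md : C, Simple Md ∧
      Module.finrank k ((M ⊗ Md) ⟶ 𝟙_ C) = 1 ∧
      Module.finrank k ((Md ⊗ M) ⟶ 𝟙_ C) = 1 ∧
      ∀ Y : C, Simple Y → ¬ Nonempty (Y ≅ Md) →
        (∀ f : (M ⊗ Y) ⟶ 𝟙_ C, f = 0) ∧ (∀ f : (Y ⊗ M) ⟶ 𝟙_ C, f = 0))
    (M L : C) (hM : ¬ IsZero M) (hL : ¬ IsZero L) :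
    ¬ IsZero (M ⊗ L) := by
  intro hz
  obtain ⟨n, f, hfs, ⟨e⟩⟩ := hss M
  obtain ⟨m, g, hgs, ⟨e'⟩⟩ := hss L
  have hn : n ≠ 0 := by
    rintro rfl
    apply hM
    rw [IsZero.iff_id_eq_zero]
    have hb : (𝟙 (⨁ f)) = 0 := by
      apply biproduct.hom_ext
      intro i
      exact i.elim0
    calc 𝟙 M = e.hom ≫ 𝟙 (⨁ f) ≫ e.inv := by simp
    _ = 0 := by rw [hb]; simp
  have hm : m ≠ 0 := by
    rintro rfl
    apply hL
    rw [IsZero.iff_id_eq_zero]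
    have hb : (𝟙 (⨁ g)) = 0 := by
      apply biproduct.hom_ext
      intro i
      exact i.elim0
    calc 𝟙 L = e'.hom ≫ 𝟙 (⨁ g) ≫ e'.inv := by simp
    _ = 0 := by rw [hb]; simp
  let i0 : Fin n := ⟨0, Nat.pos_of_ne_zero hn⟩
  let j0 : Fin m := ⟨0, Nat.pos_of_ne_zero hm⟩
  let ιM : f i0 ⟶ M := biproduct.ι f i0 ≫ e.inv
  let rM : M ⟶ f i0 := e.hom ≫ biproduct.π f i0
  have hMr : ιM ≫ rM = 𝟙 (f i0) := by simp [ιM, rM]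
  let ιL : g j0 ⟶ L := biproduct.ι g j0 ≫ e'.inv
  let rL : L ⟶ g j0 := e'.hom ≫ biproduct.π g j0
  have hLr : ιL ≫ rL = 𝟙 (g j0) := by simp [ιL, rL]
  -- the tensor of the simple summands is zero
  have hz0 : 𝟙 (f i0 ⊗ g j0) = 0 := by
    have h1 : (ιM ⊗ₘ ιL) ≫ (rM ⊗ₘ rL) = 𝟙 (f i0 ⊗ g j0) := by
      rw [MonoidalCategory.tensorHom_comp_tensorHom, hMr, hLr, MonoidalCategory.id_tensorHom_id]
    have h2 : (ιM ⊗ₘ ιL : f i0 ⊗ g j0 ⟶ M ⊗ L) = 0 := hz.eq_of_tgt _ 0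
    rw [← h1, h2, Limits.zero_comp]
  -- get a dual for g j0
  obtain ⟨D, hD, hfr, -, -⟩ := hdual (g j0) (hgs j0)
  haveI := hfd (g j0 ⊗ D) (𝟙_ C)
  have hnt : Nontrivial ((g j0 ⊗ D) ⟶ 𝟙_ C) := by
    rw [← Module.finrank_pos_iff (R := k), hfr]
    exact Nat.one_pos
  obtain ⟨φ, hφ⟩ := exists_ne (0 : (g j0 ⊗ D) ⟶ 𝟙_ C)
  -- decompose g j0 ⊗ D into simples and find a unit summand
  obtain ⟨p, h, hhs, ⟨u⟩⟩ := hss (g j0 ⊗ D)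
  have hex : ∃ i, biproduct.ι h i ≫ u.inv ≫ φ ≠ 0 := by
    by_contra hc
    push_neg at hc
    apply hφ
    have : u.inv ≫ φ = 0 := by
      apply biproduct.hom_ext'
      intro i
      rw [hc i, Limits.comp_zero]
    calc φ = u.hom ≫ (u.inv ≫ φ) := by simp
    _ = 0 := by rw [this, Limits.comp_zero]
  obtain ⟨i, hi⟩ := hex
  have hiso : Nonempty (h i ≅ 𝟙_ C) := by
    by_contra hc
    exact hi (hhom (h i) (𝟙_ C) (hhs i) hunit hc _)
  obtain ⟨v⟩ := hiso
  let s : 𝟙_ C ⟶ g j0 ⊗ D := v.inv ≫ biproduct.ι h i ≫ u.inv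
  let t : (g j0 ⊗ D) ⟶ 𝟙_ C := u.hom ≫ biproduct.π h i ≫ v.hom
  have hst : s ≫ t = 𝟙 (𝟙_ C) := by
    simp [s, t]
  -- conclude f i0 is zero, contradiction with simplicity
  have h3 : 𝟙 (f i0 ⊗ (g j0 ⊗ D)) = 0 := by
    calc 𝟙 (f i0 ⊗ (g j0 ⊗ D))
        = (α_ (f i0) (g j0) D).inv ≫ (𝟙 (f i0 ⊗ g j0) ▷ D) ≫ (α_ (f i0) (g j0) D).hom := by
          simp
    _ = 0 := by rw [hz0]; simp
  have key : 𝟙 (f i0) = 0 := by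
    calc 𝟙 (f i0) = (ρ_ (f i0)).inv ≫ (f i0 ◁ (s ≫ t)) ≫ (ρ_ (f i0)).hom := by
          rw [hst]; simp
    _ = (ρ_ (f i0)).inv ≫ (f i0 ◁ s) ≫ 𝟙 (f i0 ⊗ (g j0 ⊗ D)) ≫ (f i0 ◁ t) ≫ (ρ_ (f i0)).hom := by
          rw [MonoidalCategory.whiskerLeft_comp]; simp
    _ = 0 := by rw [h3]; simp
  haveI := hfs i0
  exact id_nonzero (f i0) key
end

section
/- For every g ∈ G, the set H_g = {h ∈ H : c_g(h) ∈ N} is a subgroup of H, and the first projection (h,n) ↦ h restricts to a group isomorphism from the stabilizer U_g of g in U onto H_g. Moreover, if the commutator subgroup [H,H] is contained in N, then H_{h'g} = H_g for every h' ∈ H; that is, the subgroup H_g depends only on the coset Hg. -/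
/-- H_g = {h ∈ H : c_g(h) ∈ N} is a subgroup of H, the first projection
restricts to a group isomorphism from the stabilizer U_g of g in U onto H_g, and if
[H,H] ⊆ N then H_{h'g} = H_g for every h' ∈ H. -/
theorem stmt9 {G : Type*} [Group G] (H N : Subgroup G) [N.Normal] (hNH : N ≤ H)
    (φ : H →* MulAut N)
    (hφ : ∀ (h : H) (n : N), ((φ h n : N) : G) = (h : G) * (n : G) * (h : G)⁻¹)
    (g : G)
    -- the stabilizer U_g of g in U = N ⋊ H, for the action (h,n)·g = n·(hgh⁻¹)
    (S : Subgroup (N ⋊[φ] H))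
    (hS : ∀ u : N ⋊[φ] H,
      u ∈ S ↔ (u.left : G) * ((u.right : G) * g * (u.right : G)⁻¹) = g) :
    ∃ Hg : Subgroup G,
      ((Hg : Set G) = {h : G | h ∈ H ∧ h * g * h⁻¹ * g⁻¹ ∈ N}) ∧
      Hg ≤ H ∧
      (∃ e : S ≃* Hg, ∀ u : S, ((e u : Hg) : G) = (((u : N ⋊[φ] H)).right : G)) ∧
      (⁅H, H⁆ ≤ N → ∀ h' ∈ H,
        {h : G | h ∈ H ∧ h * (h' * g) * h⁻¹ * (h' * g)⁻¹ ∈ N} =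
          {h : G | h ∈ H ∧ h * g * h⁻¹ * g⁻¹ ∈ N}) := by
  classical
  set Hg : Subgroup G :=
    { carrier := {h : G | h ∈ H ∧ h * g * h⁻¹ * g⁻¹ ∈ N}
      one_mem' := by
        refine ⟨one_mem H, ?_⟩
        simpa using one_mem N
      mul_mem' := by
        rintro a b ⟨haH, haN⟩ ⟨hbH, hbN⟩
        refine ⟨mul_mem haH hbH, ?_⟩
        have key : (a * b) * g * (a * b)⁻¹ * g⁻¹ =
            (a * (b * g * b⁻¹ * g⁻¹) * a⁻¹) * (a * g * a⁻¹ * g⁻¹) := by group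
        rw [key]
        exact mul_mem (Subgroup.Normal.conj_mem ‹N.Normal› _ hbN a) haN
      inv_mem' := by
        rintro a ⟨haH, haN⟩
        refine ⟨inv_mem haH, ?_⟩
        have key : a⁻¹ * g * a⁻¹⁻¹ * g⁻¹ = a⁻¹ * (a * g * a⁻¹ * g⁻¹)⁻¹ * a⁻¹⁻¹ := by group
        rw [key]
        exact Subgroup.Normal.conj_mem ‹N.Normal› _ (inv_mem haN) a⁻¹ } with hHg
  refine ⟨Hg, rfl, ?_, ?_, ?_⟩
  · intro x hx
    exact hx.1
  · -- the isomorphism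
    have memS : ∀ u : N ⋊[φ] H, u ∈ S →
        ((u.right : G) * g * (u.right : G)⁻¹ * g⁻¹ = ((u.left : G))⁻¹) := by
      intro u hu
      have h1 := (hS u).mp hu
      have hX : (u.right : G) * g * (u.right : G)⁻¹ = (u.left : G)⁻¹ * g :=
        eq_inv_mul_iff_mul_eq.mpr h1
      rw [hX]; group
    refine ⟨{
      toFun := fun u => ⟨((u : N ⋊[φ] H).right : G),
        ⟨(u : N ⋊[φ] H).right.2, by
          rw [memS _ u.2]
          exact inv_mem (u : N ⋊[φ] H).left.2⟩⟩
      invFun := fun x => by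
        refine ⟨⟨⟨g * (x : G) * g⁻¹ * (x : G)⁻¹, ?_⟩, ⟨(x : G), x.2.1⟩⟩, ?_⟩
        · have : g * (x : G) * g⁻¹ * (x : G)⁻¹ = ((x : G) * g * (x : G)⁻¹ * g⁻¹)⁻¹ := by group
          rw [this]
          exact inv_mem x.2.2
        · rw [hS]
          simp only
          group
      left_inv := by
        rintro ⟨u, hu⟩
        ext
        · -- left components
          simp only
          have := memS u hu
          have h2 : (u.left : G) = g * (u.right : G) * g⁻¹ * (u.right : G)⁻¹ := by
            rw [← inv_inv (u.left : G), ← this]; group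
          exact h2.symm
        · simp
      right_inv := by
        rintro ⟨x, hx⟩
        rfl
      map_mul' := by
        rintro ⟨u, hu⟩ ⟨v, hv⟩
        ext
        simp }, fun u => rfl⟩
  · -- dependence only on coset
    intro hcomm h' hh'
    ext h
    simp only [Set.mem_setOf_eq, and_congr_right_iff]
    intro hhH
    have key : h * (h' * g) * h⁻¹ * (h' * g)⁻¹ =
        (h * h' * h⁻¹ * h'⁻¹) * (h' * (h * g * h⁻¹ * g⁻¹) * h'⁻¹) := by group
    have hk : h * h' * h⁻¹ * h'⁻¹ ∈ N := by
      apply hcomm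
      exact Subgroup.commutator_mem_commutator hhH hh'
    constructor
    · intro hmem
      have : h' * (h * g * h⁻¹ * g⁻¹) * h'⁻¹ ∈ N := by
        have : h' * (h * g * h⁻¹ * g⁻¹) * h'⁻¹ =
            (h * h' * h⁻¹ * h'⁻¹)⁻¹ * (h * (h' * g) * h⁻¹ * (h' * g)⁻¹) := by
          rw [key]; group
        rw [this]
        exact mul_mem (inv_mem hk) hmem
      have h4 : h * g * h⁻¹ * g⁻¹ =
          h'⁻¹ * (h' * (h * g * h⁻¹ * g⁻¹) * h'⁻¹) * h'⁻¹⁻¹ := by group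
      rw [h4]
      exact Subgroup.Normal.conj_mem ‹N.Normal› _ this h'⁻¹
    · intro hmem
      rw [key]
      exact mul_mem hk (Subgroup.Normal.conj_mem ‹N.Normal› _ hmem h')
end

section
/- Assume the commutator subgroup [H,H] is contained in N. Then for every h' ∈ H, the orbit of h' under the action of U on G equals the coset Nh'. In particular, the orbits of U contained in H are exactly the cosets of N in H. -/
/-- if [H,H] ⊆ N, then for every h' ∈ H the orbit of h' under the action
(h,n)·g = n·(hgh⁻¹) of U = H ⋉ N on G equals the coset Nh'; in particular the orbits of U
contained in H are exactly the cosets of N in H. -/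
theorem stmt10 {G : Type*} [Group G] (H N : Subgroup G) [N.Normal] (hNH : N ≤ H)
    (φ : H →* MulAut N)
    (hφ : ∀ (h : H) (n : N), ((φ h n : N) : G) = (h : G) * (n : G) * (h : G)⁻¹)
    (hcomm : ⁅H, H⁆ ≤ N)
    (h' : G) (hh' : h' ∈ H) :
    {x : G | ∃ u : N ⋊[φ] H,
        (u.left : G) * ((u.right : G) * h' * (u.right : G)⁻¹) = x} =
      {x : G | ∃ n ∈ N, x = n * h'} := by
  ext x
  simp only [Set.mem_setOf_eq]
  constructor
  · rintro ⟨u, rfl⟩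
    obtain ⟨n, h⟩ := u
    have hc : (h : G) * h' * (h : G)⁻¹ * h'⁻¹ ∈ N :=
      hcomm (Subgroup.commutator_mem_commutator h.2 hh')
    refine ⟨(n : G) * ((h : G) * h' * (h : G)⁻¹ * h'⁻¹), mul_mem n.2 hc, ?_⟩
    group
  · rintro ⟨n, hn, rfl⟩
    exact ⟨⟨⟨n, hn⟩, 1⟩, by simp⟩
end
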